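/- arXiv:math/0605216 — 4 statements merged into one kernel-verified Lean document; each statement's English description precedes it below -/
import Mathlib

section
/- Let k̄ and ψ be real numbers with 0 < k̄ < 1 and 0 < ψ < π/2; set k̄' = √(1 − k̄²) and β = arctan(tan ψ / k̄'). Then ∫_0^{π/2} E(u, k̄) · sin u · cos u / ( (1 − k̄² cos²ψ sin²u) · √(1 − k̄² sin²u) ) du = (1/(k̄² sin ψ cos ψ)) · [ E(k̄) · arctan(tan ψ / k̄') − (π/2)·E(β, k̄) + (π/2) · (tan ψ / √(1 − k̄² cos²ψ)) · (1 − √(1 − k̄² cos²ψ)) ]. -/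
open Real intervalIntegral

/-- Incomplete elliptic integral of the first kind `F(φ, k)`. -/
noncomputable def ellipticF (φ k : ℝ) : ℝ :=
  ∫ θ in (0:ℝ)..φ, (1 - k ^ 2 * Real.sin θ ^ 2) ^ (-(1:ℝ)/2)

/-- Incomplete elliptic integral of the second kind `E(φ, k)`. -/
noncomputable def ellipticE (φ k : ℝ) : ℝ :=
  ∫ θ in (0:ℝ)..φ, (1 - k ^ 2 * Real.sin θ ^ 2) ^ ((1:ℝ)/2)

/-- Complete elliptic integral of the first kind `K(k)`. -/
noncomputable def completeK (k : ℝ) : ℝ := ellipticF (Real.pi / 2) k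

/-- Complete elliptic integral of the second kind `E(k)`. -/
noncomputable def completeE (k : ℝ) : ℝ := ellipticE (Real.pi / 2) k

/-- Inverse hyperbolic tangent. -/
noncomputable def arctanh (x : ℝ) : ℝ := Real.log ((1 + x) / (1 - x)) / 2

open MeasureTheory Topology Filter

section Aux
variable {a k : ℝ}

lemma pos_aux (ha0 : 0 ≤ a) (ha1 : a < 1) (u : ℝ) : 0 < 1 - a * Real.sin u ^ 2 := by
  nlinarith [Real.sin_sq_le_one u, sq_nonneg (Real.sin u)]

lemma sq_lt_one' (hk0 : 0 < k) (hk1 : k < 1) : k ^ 2 < 1 := by nlinarith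

lemma ellipticE_eq_sqrt (hk2 : k ^ 2 < 1) (φ : ℝ) :
    ellipticE φ k = ∫ θ in (0:ℝ)..φ, Real.sqrt (1 - k ^ 2 * Real.sin θ ^ 2) := by
  unfold ellipticE
  refine intervalIntegral.integral_congr fun θ _ => ?_
  rw [Real.sqrt_eq_rpow]

lemma cont_sqrtDelta (k : ℝ) : Continuous fun θ : ℝ => Real.sqrt (1 - k ^ 2 * Real.sin θ ^ 2) :=
  (continuous_const.sub ((continuous_const.mul ((Real.continuous_sin.pow 2))))).sqrt

lemma ellipticE_hasDerivAt (hk2 : k ^ 2 < 1) (x : ℝ) :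
    HasDerivAt (fun φ => ellipticE φ k) (Real.sqrt (1 - k ^ 2 * Real.sin x ^ 2)) x := by
  have h := ((cont_sqrtDelta k).integral_hasStrictDerivAt 0 x).hasDerivAt
  refine h.congr_of_eventuallyEq ?_
  filter_upwards with φ
  exact ellipticE_eq_sqrt hk2 φ

end Aux

section Std
variable {a : ℝ}

lemma hasDerivAt_F (ha0 : 0 ≤ a) (ha1 : a < 1) {b : ℝ} (hb : Real.cos b ≠ 0) :
    HasDerivAt (fun x => Real.arctan (Real.sqrt (1 - a) * Real.tan x) / Real.sqrt (1 - a))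
      (1 / (1 - a * Real.sin b ^ 2)) b := by
  have hc : 0 < Real.sqrt (1 - a) := Real.sqrt_pos.2 (by linarith)
  have hc2 : Real.sqrt (1 - a) ^ 2 = 1 - a := Real.sq_sqrt (by linarith)
  have h1 : HasDerivAt (fun x => Real.arctan (Real.sqrt (1 - a) * Real.tan x))
      ((1 / (1 + (Real.sqrt (1 - a) * Real.tan b) ^ 2)) * (Real.sqrt (1 - a) * (1 / Real.cos b ^ 2))) b := by
    exact (Real.hasDerivAt_arctan _).comp b (((Real.hasDerivAt_tan hb).const_mul (Real.sqrt (1-a))))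
  have h2 := h1.div_const (Real.sqrt (1 - a))
  refine h2.congr_deriv (Eq.symm ?_)
  have hpos : 0 < 1 - a * Real.sin b ^ 2 := pos_aux ha0 ha1 b
  have hs : Real.sin b ^ 2 + Real.cos b ^ 2 = 1 := Real.sin_sq_add_cos_sq b
  rw [Real.tan_eq_sin_div_cos]
  field_simp
  linear_combination (Real.sin b ^ 2) * hc2 + hs

lemma cont_inv_std (ha0 : 0 ≤ a) (ha1 : a < 1) :
    Continuous fun u : ℝ => 1 / (1 - a * Real.sin u ^ 2) := by
  refine continuous_const.div (continuous_const.sub (continuous_const.mul (Real.continuous_sin.pow 2))) ?_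
  exact fun u => ne_of_gt (pos_aux ha0 ha1 u)

lemma integral_std (ha0 : 0 ≤ a) (ha1 : a < 1) :
    (∫ u in (0:ℝ)..(Real.pi/2), 1 / (1 - a * Real.sin u ^ 2))
      = Real.pi / (2 * Real.sqrt (1 - a)) := by
  have hc : 0 < Real.sqrt (1 - a) := Real.sqrt_pos.2 (by linarith)
  have hcont := cont_inv_std ha0 ha1
  set f := fun u : ℝ => 1 / (1 - a * Real.sin u ^ 2) with hf
  set P := fun b : ℝ => ∫ u in (0:ℝ)..b, f u with hP
  have hPcont : ContinuousAt P (Real.pi/2) :=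
    ((hcont.integral_hasStrictDerivAt 0 (Real.pi/2)).hasDerivAt).continuousAt
  have hne : (𝓝[<] (Real.pi/2)).NeBot := by infer_instance
  have hT1 : Filter.Tendsto P (𝓝[<] (Real.pi/2)) (𝓝 (P (Real.pi/2))) :=
    hPcont.continuousWithinAt.tendsto
  have heq : ∀ b ∈ Set.Ioo 0 (Real.pi/2), P b = Real.arctan (Real.sqrt (1 - a) * Real.tan b) / Real.sqrt (1 - a) := by
    intro b hb
    have : ∀ x ∈ Set.uIcc (0:ℝ) b, HasDerivAt
        (fun x => Real.arctan (Real.sqrt (1 - a) * Real.tan x) / Real.sqrt (1 - a)) (f x) x := by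
      intro x hx
      rw [Set.uIcc_of_le hb.1.le] at hx
      refine hasDerivAt_F ha0 ha1 (ne_of_gt (Real.cos_pos_of_mem_Ioo ⟨?_, ?_⟩))
      · linarith [hx.1, Real.pi_pos]
      · linarith [hx.2, hb.2]
    have := intervalIntegral.integral_eq_sub_of_hasDerivAt this (hcont.intervalIntegrable 0 b)
    show (∫ u in (0:ℝ)..b, f u) = _
    rw [this]; simp [Real.tan_zero]
  have hT2 : Filter.Tendsto P (𝓝[<] (Real.pi/2)) (𝓝 ((Real.pi/2) / Real.sqrt (1 - a))) := by
    have htan : Filter.Tendsto (fun b => Real.sqrt (1 - a) * Real.tan b) (𝓝[<] (Real.pi/2)) Filter.atTop :=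
      (Real.tendsto_tan_pi_div_two).const_mul_atTop hc
    have harc : Filter.Tendsto (fun b => Real.arctan (Real.sqrt (1 - a) * Real.tan b) / Real.sqrt (1 - a))
        (𝓝[<] (Real.pi/2)) (𝓝 ((Real.pi/2) / Real.sqrt (1 - a))) :=
      ((Real.tendsto_arctan_atTop.mono_right nhdsWithin_le_nhds).comp htan).div_const _
    refine harc.congr' ?_
    filter_upwards [Ioo_mem_nhdsLT_of_mem (by constructor <;> [linarith [Real.pi_pos]; rfl] : Real.pi/2 ∈ Set.Ioc 0 (Real.pi/2))] with b hb
    exact (heq b hb).symm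
  have h := tendsto_nhds_unique hT1 hT2
  show P (Real.pi/2) = _
  rw [h]; ring

end Std

section Inner
variable {k a : ℝ}

lemma pos_aux2 (hk1 : k ^ 2 < 1) (t u : ℝ) :
    0 < 1 - k ^ 2 * Real.cos t ^ 2 * Real.sin u ^ 2 := by
  have hcs : Real.cos t ^ 2 * Real.sin u ^ 2 ≤ 1 :=
    mul_le_one₀ (Real.cos_sq_le_one t) (sq_nonneg _) (Real.sin_sq_le_one u)
  nlinarith [sq_nonneg k, mul_le_mul_of_nonneg_left hcs (sq_nonneg k)]

lemma integral_ratio (hk1 : k ^ 2 < 1) (ha0 : 0 < a) (ha1 : a ≤ k ^ 2) :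
    (∫ u in (0:ℝ)..(Real.pi/2), (1 - k ^ 2 * Real.sin u ^ 2) / (1 - a * Real.sin u ^ 2))
      = Real.pi / 2 * (k ^ 2 / a + (1 - k ^ 2 / a) / Real.sqrt (1 - a)) := by
  have ha1' : a < 1 := lt_of_le_of_lt ha1 hk1
  have hcong : ∀ u ∈ Set.uIcc (0:ℝ) (Real.pi/2),
      (1 - k ^ 2 * Real.sin u ^ 2) / (1 - a * Real.sin u ^ 2)
        = k ^ 2 / a + (1 - k ^ 2 / a) * (1 / (1 - a * Real.sin u ^ 2)) := by
    intro u _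
    have h := pos_aux ha0.le ha1' u
    have h' : 1 - a * Real.sin u ^ 2 ≠ 0 := h.ne'
    have ha' : a ≠ 0 := ha0.ne'
    have h'' : 1 - Real.sin u ^ 2 * a ≠ 0 := by rw [mul_comm]; exact h'
    field_simp
    ring
  rw [intervalIntegral.integral_congr hcong]
  rw [intervalIntegral.integral_add (intervalIntegrable_const)
    (show
      IntervalIntegrable (fun u => (1 - k ^ 2 / a) * (1 / (1 - a * Real.sin u ^ 2))) volume 0 (Real.pi/2) by
      exact (continuous_const.mul (cont_inv_std ha0.le ha1')).intervalIntegrable 0 (Real.pi/2)),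
    intervalIntegral.integral_const_mul, integral_std ha0.le ha1',
    intervalIntegral.integral_const]
  simp only [smul_eq_mul]
  field_simp
  ring

lemma sqrtDelta_pos (hk1 : k ^ 2 < 1) (u : ℝ) : 0 < Real.sqrt (1 - k ^ 2 * Real.sin u ^ 2) := by
  have : 0 < 1 - k ^ 2 * Real.sin u ^ 2 := by
    nlinarith [Real.sin_sq_le_one u, sq_nonneg (Real.sin u), sq_nonneg k]
  exact Real.sqrt_pos.2 this

lemma sqrtDelta_sq (hk1 : k ^ 2 < 1) (u : ℝ) :
    Real.sqrt (1 - k ^ 2 * Real.sin u ^ 2) ^ 2 = 1 - k ^ 2 * Real.sin u ^ 2 := by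
  refine Real.sq_sqrt ?_
  nlinarith [Real.sin_sq_le_one u, sq_nonneg (Real.sin u), sq_nonneg k]

/-- arctan(tan ψ / √Δ(u)) as an integral over t. -/
lemma arctan_as_integral (hk1 : k ^ 2 < 1) {ψ : ℝ} (hψ0 : 0 ≤ ψ) (hψ1 : ψ < Real.pi/2) (u : ℝ) :
    Real.sqrt (1 - k ^ 2 * Real.sin u ^ 2)
        * Real.arctan (Real.tan ψ / Real.sqrt (1 - k ^ 2 * Real.sin u ^ 2))
      = ∫ t in (0:ℝ)..ψ, (1 - k ^ 2 * Real.sin u ^ 2)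
          / (1 - k ^ 2 * Real.cos t ^ 2 * Real.sin u ^ 2) := by
  set d := Real.sqrt (1 - k ^ 2 * Real.sin u ^ 2) with hd
  have hdpos : 0 < d := sqrtDelta_pos hk1 u
  have hd2 : d ^ 2 = 1 - k ^ 2 * Real.sin u ^ 2 := sqrtDelta_sq hk1 u
  have key : ∀ t ∈ Set.uIcc (0:ℝ) ψ,
      HasDerivAt (fun t => Real.arctan (Real.tan t / d))
        (d / (1 - k ^ 2 * Real.cos t ^ 2 * Real.sin u ^ 2)) t := by
    intro t ht
    rw [Set.uIcc_of_le hψ0] at ht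
    have hct : 0 < Real.cos t :=
      Real.cos_pos_of_mem_Ioo ⟨by linarith [ht.1, Real.pi_pos], by linarith [ht.2]⟩
    have h1 := ((Real.hasDerivAt_tan hct.ne').div_const d)
    have h2 := (Real.hasDerivAt_arctan (Real.tan t / d)).comp t h1
    refine h2.congr_deriv (Eq.symm ?_)
    have hs : Real.sin t ^ 2 + Real.cos t ^ 2 = 1 := Real.sin_sq_add_cos_sq t
    rw [Real.tan_eq_sin_div_cos]
    have hden : (0:ℝ) < 1 - k ^ 2 * Real.cos t ^ 2 * Real.sin u ^ 2 := pos_aux2 hk1 t u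
    field_simp
    linear_combination (Real.cos t ^ 2) * hd2 + hs
  have hcont : ContinuousOn (fun t => d / (1 - k ^ 2 * Real.cos t ^ 2 * Real.sin u ^ 2))
      (Set.uIcc (0:ℝ) ψ) := by
    refine (continuousOn_const.div (Continuous.continuousOn (by continuity)) ?_)
    exact fun t _ => (pos_aux2 hk1 t u).ne'
  have hftc := intervalIntegral.integral_eq_sub_of_hasDerivAt key
    (hcont.intervalIntegrable)
  have h0 : Real.arctan (Real.tan 0 / d) = 0 := by simp [Real.tan_zero]
  rw [h0, sub_zero] at hftc
  calc d * Real.arctan (Real.tan ψ / d)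
      = d * ∫ t in (0:ℝ)..ψ, d / (1 - k ^ 2 * Real.cos t ^ 2 * Real.sin u ^ 2) := by rw [hftc]
    _ = ∫ t in (0:ℝ)..ψ, d * (d / (1 - k ^ 2 * Real.cos t ^ 2 * Real.sin u ^ 2)) := by
        rw [intervalIntegral.integral_const_mul]
    _ = _ := by
        refine intervalIntegral.integral_congr fun t _ => ?_
        rw [← hd2]; ring

end Inner

section Fubini

lemma interval_swap {g : ℝ → ℝ → ℝ} (hg : Continuous (Function.uncurry g))
    {A B : ℝ} (hA : 0 ≤ A) (hB : 0 ≤ B) :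
    (∫ u in (0:ℝ)..A, ∫ t in (0:ℝ)..B, g u t) = ∫ t in (0:ℝ)..B, ∫ u in (0:ℝ)..A, g u t := by
  rw [intervalIntegral.integral_of_le hA, intervalIntegral.integral_of_le hB]
  simp_rw [intervalIntegral.integral_of_le hB, intervalIntegral.integral_of_le hA]
  apply MeasureTheory.integral_integral_swap
  rw [MeasureTheory.Measure.prod_restrict]
  have hsub : (Set.Ioc (0:ℝ) A) ×ˢ (Set.Ioc (0:ℝ) B) ⊆ (Set.Icc (0:ℝ) A) ×ˢ (Set.Icc (0:ℝ) B) :=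
    Set.prod_mono Set.Ioc_subset_Icc_self Set.Ioc_subset_Icc_self
  exact ((hg.continuousOn.integrableOn_compact (isCompact_Icc.prod isCompact_Icc)).mono_set hsub)

end Fubini

section TanInt
variable {k : ℝ}

lemma cos_pos_of_Icc {ψ t : ℝ} (hψ1 : ψ < Real.pi/2) (ht : t ∈ Set.Icc 0 ψ) : 0 < Real.cos t :=
  Real.cos_pos_of_mem_Ioo ⟨by linarith [ht.1, Real.pi_pos], by linarith [ht.2]⟩

lemma w_pos (hk1 : k ^ 2 < 1) (t : ℝ) : 0 < 1 - k ^ 2 * Real.cos t ^ 2 := by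
  nlinarith [Real.cos_sq_le_one t, sq_nonneg (Real.cos t), sq_nonneg k]

/-- integral of sec^2 -/
lemma integral_sec_sq {ψ : ℝ} (hψ0 : 0 ≤ ψ) (hψ1 : ψ < Real.pi/2) :
    (∫ t in (0:ℝ)..ψ, 1 / Real.cos t ^ 2) = Real.tan ψ := by
  have key : ∀ t ∈ Set.uIcc (0:ℝ) ψ, HasDerivAt Real.tan (1 / Real.cos t ^ 2) t := by
    intro t ht
    rw [Set.uIcc_of_le hψ0] at ht
    exact Real.hasDerivAt_tan (cos_pos_of_Icc hψ1 ht).ne'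
  have hcont : ContinuousOn (fun t => 1 / Real.cos t ^ 2) (Set.uIcc (0:ℝ) ψ) := by
    refine continuousOn_const.div (Real.continuous_cos.pow 2).continuousOn ?_
    intro t ht
    rw [Set.uIcc_of_le hψ0] at ht
    exact pow_ne_zero 2 (cos_pos_of_Icc hψ1 ht).ne'
  rw [intervalIntegral.integral_eq_sub_of_hasDerivAt key hcont.intervalIntegrable]
  simp [Real.tan_zero]

end TanInt

section TanSq
variable {k : ℝ}

lemma one_sub_k_sin_arctan (hk1 : k ^ 2 < 1) {t : ℝ} (hct : Real.cos t ≠ 0) :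
    1 - k ^ 2 * Real.sin (Real.arctan (Real.tan t / Real.sqrt (1 - k ^ 2))) ^ 2
      = (1 - k ^ 2) / (1 - k ^ 2 * Real.cos t ^ 2) := by
  have hk' : Real.sqrt (1 - k ^ 2) ^ 2 = 1 - k ^ 2 := Real.sq_sqrt (by linarith)
  set x := Real.tan t / Real.sqrt (1 - k ^ 2) with hx
  have h1x : (0:ℝ) < 1 + x ^ 2 := by positivity
  have hw := w_pos hk1 t
  have hs : Real.sin t ^ 2 + Real.cos t ^ 2 = 1 := Real.sin_sq_add_cos_sq t
  have hcc : Real.cos t ^ 2 ≠ 0 := pow_ne_zero 2 hct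
  have hkk : (1:ℝ) - k ^ 2 ≠ 0 := ne_of_gt (by linarith)
  have hx2 : x ^ 2 = Real.sin t ^ 2 / (Real.cos t ^ 2 * (1 - k ^ 2)) := by
    rw [hx, Real.tan_eq_sin_div_cos, div_pow, div_pow, hk']
    field_simp
  have h1x2 : 1 + x ^ 2 = (1 - k ^ 2 * Real.cos t ^ 2) / (Real.cos t ^ 2 * (1 - k ^ 2)) := by
    rw [hx2]
    field_simp
    linear_combination hs
  rw [Real.sin_arctan, div_pow, Real.sq_sqrt h1x.le, h1x2, hx2]
  field_simp
  linear_combination (-(k ^ 2)) * hs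

lemma hasDerivAt_G (hk1 : k ^ 2 < 1) {t : ℝ} (hct : 0 < Real.cos t) :
    HasDerivAt (fun t => Real.tan t / Real.sqrt (1 - k ^ 2 * Real.cos t ^ 2)
        - ellipticE (Real.arctan (Real.tan t / Real.sqrt (1 - k ^ 2))) k)
      (Real.tan t ^ 2 / Real.sqrt (1 - k ^ 2 * Real.cos t ^ 2)) t := by
  have hw : 0 < 1 - k ^ 2 * Real.cos t ^ 2 := w_pos hk1 t
  have hK0 : (0:ℝ) < 1 - k ^ 2 := by linarith
  have hKpos : 0 < Real.sqrt (1 - k ^ 2) := Real.sqrt_pos.2 hK0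
  have hK2 : Real.sqrt (1 - k ^ 2) ^ 2 = 1 - k ^ 2 := Real.sq_sqrt hK0.le
  have hswpos : 0 < Real.sqrt (1 - k ^ 2 * Real.cos t ^ 2) := Real.sqrt_pos.2 hw
  have hsw2 : Real.sqrt (1 - k ^ 2 * Real.cos t ^ 2) ^ 2 = 1 - k ^ 2 * Real.cos t ^ 2 :=
    Real.sq_sqrt hw.le
  have hwD : HasDerivAt (fun t => 1 - k ^ 2 * Real.cos t ^ 2)
      (2 * k ^ 2 * Real.cos t * Real.sin t) t := by
    have h := (((Real.hasDerivAt_cos t).pow 2).const_mul (k ^ 2)).const_sub 1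
    refine h.congr_deriv (Eq.symm ?_)
    ring
  have hsqrtw : HasDerivAt (fun t => Real.sqrt (1 - k ^ 2 * Real.cos t ^ 2))
      (k ^ 2 * Real.cos t * Real.sin t / Real.sqrt (1 - k ^ 2 * Real.cos t ^ 2)) t := by
    have h := (Real.hasDerivAt_sqrt hw.ne').comp t hwD
    refine h.congr_deriv (Eq.symm ?_)
    field_simp
  have htan := Real.hasDerivAt_tan hct.ne'
  have hA := htan.div hsqrtw hswpos.ne'
  have hβ := (Real.hasDerivAt_arctan (Real.tan t / Real.sqrt (1 - k ^ 2))).comp t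
    (htan.div_const (Real.sqrt (1 - k ^ 2)))
  have hB := (ellipticE_hasDerivAt hk1
    (Real.arctan (Real.tan t / Real.sqrt (1 - k ^ 2)))).comp t hβ
  have htot := hA.sub hB
  refine htot.congr_deriv (Eq.symm ?_)
  rw [one_sub_k_sin_arctan hk1 hct.ne', Real.sqrt_div hK0.le]
  have hs : Real.sin t ^ 2 + Real.cos t ^ 2 = 1 := Real.sin_sq_add_cos_sq t
  have hcc : Real.cos t ^ 2 ≠ 0 := pow_ne_zero 2 hct.ne'
  set S := Real.sqrt (1 - k ^ 2 * Real.cos t ^ 2) with hS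
  set K := Real.sqrt (1 - k ^ 2) with hK
  have hw' : 1 - Real.cos t ^ 2 * k ^ 2 ≠ 0 := by rw [mul_comm]; exact hw.ne'
  have hb1 : 1 / (1 + (Real.tan t / K) ^ 2) * (1 / Real.cos t ^ 2 / K)
      = K / (1 - k ^ 2 * Real.cos t ^ 2) := by
    rw [Real.tan_eq_sin_div_cos]
    field_simp
    linear_combination (-(Real.cos t ^ 2)) * hK2 - hs
  rw [hb1, Real.tan_eq_sin_div_cos]
  field_simp
  linear_combination (Real.cos t ^ 2 * S ^ 2) * hK2 + (-(Real.sin t ^ 2 * Real.cos t ^ 2 * k ^ 2)) * hsw2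
    + S ^ 2 * hs

lemma contOn_tansq (hk1 : k ^ 2 < 1) {ψ : ℝ} (hψ0 : 0 ≤ ψ) (hψ1 : ψ < Real.pi/2) :
    ContinuousOn (fun t => Real.tan t ^ 2 / Real.sqrt (1 - k ^ 2 * Real.cos t ^ 2))
      (Set.uIcc (0:ℝ) ψ) := by
  rw [Set.uIcc_of_le hψ0]
  have hc : ∀ t ∈ Set.Icc (0:ℝ) ψ, Real.cos t ≠ 0 := fun t ht => (cos_pos_of_Icc hψ1 ht).ne'
  refine ContinuousOn.div ?_ ?_ ?_
  · exact ((Real.continuous_sin.continuousOn.div Real.continuous_cos.continuousOn hc).pow 2).congr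
      (fun t ht => by simp [Real.tan_eq_sin_div_cos, Pi.div_apply])
  · exact (Continuous.continuousOn (by continuity)).sqrt
  · exact fun t ht => (Real.sqrt_pos.2 (w_pos hk1 t)).ne'

lemma integral_tan_sq (hk1 : k ^ 2 < 1) {ψ : ℝ} (hψ0 : 0 ≤ ψ) (hψ1 : ψ < Real.pi/2) :
    (∫ t in (0:ℝ)..ψ, Real.tan t ^ 2 / Real.sqrt (1 - k ^ 2 * Real.cos t ^ 2))
      = Real.tan ψ / Real.sqrt (1 - k ^ 2 * Real.cos ψ ^ 2)
        - ellipticE (Real.arctan (Real.tan ψ / Real.sqrt (1 - k ^ 2))) k := by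
  have key : ∀ t ∈ Set.uIcc (0:ℝ) ψ,
      HasDerivAt (fun t => Real.tan t / Real.sqrt (1 - k ^ 2 * Real.cos t ^ 2)
        - ellipticE (Real.arctan (Real.tan t / Real.sqrt (1 - k ^ 2))) k)
        (Real.tan t ^ 2 / Real.sqrt (1 - k ^ 2 * Real.cos t ^ 2)) t := by
    intro t ht
    rw [Set.uIcc_of_le hψ0] at ht
    exact hasDerivAt_G hk1 (cos_pos_of_Icc hψ1 ht)
  rw [intervalIntegral.integral_eq_sub_of_hasDerivAt key
    (contOn_tansq hk1 hψ0 hψ1).intervalIntegrable]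
  have h0 : ellipticE 0 k = 0 := intervalIntegral.integral_same
  simp [Real.tan_zero, h0]

end TanSq

section Jval
variable {k : ℝ}

lemma J_val (hk0 : 0 < k) (hk1 : k < 1) {ψ : ℝ} (hψ0 : 0 < ψ) (hψ1 : ψ < Real.pi/2) :
    (∫ u in (0:ℝ)..(Real.pi/2), Real.sqrt (1 - k ^ 2 * Real.sin u ^ 2)
        * Real.arctan (Real.tan ψ / Real.sqrt (1 - k ^ 2 * Real.sin u ^ 2)))
      = Real.pi/2 * (ellipticE (Real.arctan (Real.tan ψ / Real.sqrt (1 - k ^ 2))) k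
          + Real.tan ψ - Real.tan ψ / Real.sqrt (1 - k ^ 2 * Real.cos ψ ^ 2)) := by
  have hk2 : k ^ 2 < 1 := sq_lt_one' hk0 hk1
  have h1 : (∫ u in (0:ℝ)..(Real.pi/2), Real.sqrt (1 - k ^ 2 * Real.sin u ^ 2)
        * Real.arctan (Real.tan ψ / Real.sqrt (1 - k ^ 2 * Real.sin u ^ 2)))
      = ∫ u in (0:ℝ)..(Real.pi/2), ∫ t in (0:ℝ)..ψ,
          (1 - k ^ 2 * Real.sin u ^ 2) / (1 - k ^ 2 * Real.cos t ^ 2 * Real.sin u ^ 2) :=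
    intervalIntegral.integral_congr fun u _ => arctan_as_integral hk2 hψ0.le hψ1 u
  rw [h1]
  have hgc : Continuous (Function.uncurry fun u t =>
      (1 - k ^ 2 * Real.sin u ^ 2) / (1 - k ^ 2 * Real.cos t ^ 2 * Real.sin u ^ 2)) := by
    apply Continuous.div
    · apply Continuous.sub continuous_const
      exact (continuous_const.mul ((Real.continuous_sin.comp continuous_fst).pow 2))
    · apply Continuous.sub continuous_const
      exact ((continuous_const.mul ((Real.continuous_cos.comp continuous_snd).pow 2)).mul
        ((Real.continuous_sin.comp continuous_fst).pow 2))
    · intro p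
      exact (pos_aux2 hk2 p.2 p.1).ne'
  rw [interval_swap hgc (by positivity) hψ0.le]
  have h3 : ∀ t ∈ Set.uIcc (0:ℝ) ψ,
      (∫ u in (0:ℝ)..(Real.pi/2),
          (1 - k ^ 2 * Real.sin u ^ 2) / (1 - k ^ 2 * Real.cos t ^ 2 * Real.sin u ^ 2))
        = Real.pi/2 * (1 / Real.cos t ^ 2
            - Real.tan t ^ 2 / Real.sqrt (1 - k ^ 2 * Real.cos t ^ 2)) := by
    intro t ht
    rw [Set.uIcc_of_le hψ0.le] at ht
    have hct : 0 < Real.cos t := cos_pos_of_Icc hψ1 ht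
    have ha0 : 0 < k ^ 2 * Real.cos t ^ 2 := by positivity
    have ha1 : k ^ 2 * Real.cos t ^ 2 ≤ k ^ 2 := by nlinarith [Real.cos_sq_le_one t, sq_nonneg k]
    rw [integral_ratio hk2 ha0 ha1]
    have hsw : 0 < Real.sqrt (1 - k ^ 2 * Real.cos t ^ 2) := Real.sqrt_pos.2 (w_pos hk2 t)
    have hs : Real.sin t ^ 2 + Real.cos t ^ 2 = 1 := Real.sin_sq_add_cos_sq t
    rw [Real.tan_eq_sin_div_cos]
    have hc2 : Real.cos t ^ 2 ≠ 0 := pow_ne_zero 2 hct.ne'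
    field_simp
    linear_combination hs
  rw [intervalIntegral.integral_congr h3]
  have hint1 : IntervalIntegrable (fun t => 1 / Real.cos t ^ 2) volume 0 ψ := by
    refine (ContinuousOn.intervalIntegrable ?_)
    refine continuousOn_const.div ((Real.continuous_cos.pow 2).continuousOn) ?_
    intro t ht
    rw [Set.uIcc_of_le hψ0.le] at ht
    exact pow_ne_zero 2 (cos_pos_of_Icc hψ1 ht).ne'
  have hint2 : IntervalIntegrable
      (fun t => Real.tan t ^ 2 / Real.sqrt (1 - k ^ 2 * Real.cos t ^ 2)) volume 0 ψ :=
    (contOn_tansq hk2 hψ0.le hψ1).intervalIntegrable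
  simp_rw [mul_sub]
  rw [intervalIntegral.integral_sub (hint1.const_mul _) (hint2.const_mul _),
    intervalIntegral.integral_const_mul, intervalIntegral.integral_const_mul,
    integral_sec_sq hψ0.le hψ1, integral_tan_sq hk2 hψ0.le hψ1]
  ring

end Jval

theorem stmt_13 (kb ψ : ℝ) (hk0 : 0 < kb) (hk1 : kb < 1)
    (hψ0 : 0 < ψ) (hψ1 : ψ < Real.pi / 2)
    (kb' β : ℝ) (hkb' : kb' = Real.sqrt (1 - kb ^ 2))
    (hβ : β = Real.arctan (Real.tan ψ / kb')) :
    (∫ u in (0:ℝ)..(Real.pi / 2),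
        ellipticE u kb * Real.sin u * Real.cos u /
          ((1 - kb ^ 2 * Real.cos ψ ^ 2 * Real.sin u ^ 2)
            * Real.sqrt (1 - kb ^ 2 * Real.sin u ^ 2)))
      = 1 / (kb ^ 2 * Real.sin ψ * Real.cos ψ) *
          (completeE kb * Real.arctan (Real.tan ψ / kb')
            - Real.pi / 2 * ellipticE β kb
            + Real.pi / 2 * (Real.tan ψ / Real.sqrt (1 - kb ^ 2 * Real.cos ψ ^ 2))
              * (1 - Real.sqrt (1 - kb ^ 2 * Real.cos ψ ^ 2))) := by
  have hψc : 0 < Real.cos ψ := Real.cos_pos_of_mem_Ioo ⟨by linarith [Real.pi_pos], hψ1⟩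
  have hψs : 0 < Real.sin ψ := Real.sin_pos_of_pos_of_lt_pi hψ0 (by linarith [Real.pi_pos])
  have hk2 : kb ^ 2 < 1 := sq_lt_one' hk0 hk1
  have hK0 : (0:ℝ) < 1 - kb ^ 2 := by linarith
  have hψss : Real.sin ψ ^ 2 + Real.cos ψ ^ 2 = 1 := Real.sin_sq_add_cos_sq ψ
  set m : ℝ := Real.cos ψ / Real.sin ψ with hm
  have hm0 : 0 < m := div_pos hψc hψs
  set C : ℝ := -(1 / (kb ^ 2 * Real.sin ψ * Real.cos ψ)) with hC
  -- derivative of v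
  have hv : ∀ x ∈ Set.uIcc (0:ℝ) (Real.pi/2),
      HasDerivAt (fun x => C * Real.arctan (m * Real.sqrt (1 - kb ^ 2 * Real.sin x ^ 2)))
        (Real.sin x * Real.cos x / ((1 - kb ^ 2 * Real.cos ψ ^ 2 * Real.sin x ^ 2)
          * Real.sqrt (1 - kb ^ 2 * Real.sin x ^ 2))) x := by
    intro x _
    have hΔpos : 0 < 1 - kb ^ 2 * Real.sin x ^ 2 := pos_aux (sq_nonneg kb) hk2 x
    have hΔD : HasDerivAt (fun x => 1 - kb ^ 2 * Real.sin x ^ 2)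
        (-(kb ^ 2 * (2 * Real.sin x * Real.cos x))) x := by
      have h := (((Real.hasDerivAt_sin x).pow 2).const_mul (kb ^ 2)).const_sub 1
      refine h.congr_deriv (Eq.symm ?_)
      ring
    have hsq := (Real.hasDerivAt_sqrt hΔpos.ne').comp x hΔD
    have harc := (Real.hasDerivAt_arctan
      (m * Real.sqrt (1 - kb ^ 2 * Real.sin x ^ 2))).comp x (hsq.const_mul m)
    have hfin := harc.const_mul C
    refine hfin.congr_deriv (Eq.symm ?_)
    have hS2 : Real.sqrt (1 - kb ^ 2 * Real.sin x ^ 2) ^ 2 = 1 - kb ^ 2 * Real.sin x ^ 2 :=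
      Real.sq_sqrt hΔpos.le
    have hSpos : 0 < Real.sqrt (1 - kb ^ 2 * Real.sin x ^ 2) := Real.sqrt_pos.2 hΔpos
    have hden : 0 < 1 - kb ^ 2 * Real.cos ψ ^ 2 * Real.sin x ^ 2 := pos_aux2 hk2 ψ x
    have hsx : Real.sin x ^ 2 + Real.cos x ^ 2 = 1 := Real.sin_sq_add_cos_sq x
    rw [hC, hm]
    set S := Real.sqrt (1 - kb ^ 2 * Real.sin x ^ 2) with hS
    have hden' : 1 - Real.sin x ^ 2 * kb ^ 2 * Real.cos ψ ^ 2 ≠ 0 := by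
      rw [show Real.sin x ^ 2 * kb ^ 2 * Real.cos ψ ^ 2 = kb ^ 2 * Real.cos ψ ^ 2 * Real.sin x ^ 2 by ring]
      exact hden.ne'
    field_simp
    linear_combination (Real.sin x * Real.cos x * Real.cos ψ ^ 2) * hS2 + (Real.sin x * Real.cos x) * hψss
  -- integration by parts
  have hLHS : (∫ u in (0:ℝ)..(Real.pi/2), ellipticE u kb * Real.sin u * Real.cos u /
        ((1 - kb ^ 2 * Real.cos ψ ^ 2 * Real.sin u ^ 2) * Real.sqrt (1 - kb ^ 2 * Real.sin u ^ 2)))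
      = ∫ u in (0:ℝ)..(Real.pi/2), ellipticE u kb * (Real.sin u * Real.cos u /
        ((1 - kb ^ 2 * Real.cos ψ ^ 2 * Real.sin u ^ 2) * Real.sqrt (1 - kb ^ 2 * Real.sin u ^ 2))) :=
    intervalIntegral.integral_congr fun u _ => by ring
  have hu : ∀ x ∈ Set.uIcc (0:ℝ) (Real.pi/2), HasDerivAt (fun φ => ellipticE φ kb)
      (Real.sqrt (1 - kb ^ 2 * Real.sin x ^ 2)) x := fun x _ => ellipticE_hasDerivAt hk2 x
  have hu' : IntervalIntegrable (fun x => Real.sqrt (1 - kb ^ 2 * Real.sin x ^ 2))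
      volume 0 (Real.pi/2) := (cont_sqrtDelta kb).intervalIntegrable 0 (Real.pi/2)
  have hv' : IntervalIntegrable (fun x => Real.sin x * Real.cos x /
      ((1 - kb ^ 2 * Real.cos ψ ^ 2 * Real.sin x ^ 2) * Real.sqrt (1 - kb ^ 2 * Real.sin x ^ 2)))
      volume 0 (Real.pi/2) := by
    refine Continuous.intervalIntegrable ?_ 0 _
    refine Continuous.div (by continuity) ?_ ?_
    · exact (continuous_const.sub (continuous_const.mul (Real.continuous_sin.pow 2))).mul
        (cont_sqrtDelta kb)
    · intro x
      exact (mul_pos (pos_aux2 hk2 ψ x) (sqrtDelta_pos hk2 x)).ne'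
  have hparts := intervalIntegral.integral_mul_deriv_eq_deriv_mul hu hv hu' hv'
  rw [hLHS, hparts]
  have hE0 : ellipticE 0 kb = 0 := intervalIntegral.integral_same
  have htanpos : 0 < Real.tan ψ := Real.tan_pos_of_pos_of_lt_pi_div_two hψ0 hψ1
  -- split the remaining integral
  have hpt : ∀ x ∈ Set.uIcc (0:ℝ) (Real.pi/2),
      Real.sqrt (1 - kb ^ 2 * Real.sin x ^ 2)
          * (C * Real.arctan (m * Real.sqrt (1 - kb ^ 2 * Real.sin x ^ 2)))
        = C * (Real.sqrt (1 - kb ^ 2 * Real.sin x ^ 2) * (Real.pi/2)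
            - Real.sqrt (1 - kb ^ 2 * Real.sin x ^ 2)
              * Real.arctan (Real.tan ψ / Real.sqrt (1 - kb ^ 2 * Real.sin x ^ 2))) := by
    intro x _
    have hSpos := sqrtDelta_pos hk2 x
    have hxpos : 0 < Real.tan ψ / Real.sqrt (1 - kb ^ 2 * Real.sin x ^ 2) := div_pos htanpos hSpos
    have harc := Real.arctan_inv_of_pos hxpos
    have hinv : (Real.tan ψ / Real.sqrt (1 - kb ^ 2 * Real.sin x ^ 2))⁻¹
        = m * Real.sqrt (1 - kb ^ 2 * Real.sin x ^ 2) := by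
      rw [Real.tan_eq_sin_div_cos, hm]
      field_simp
    rw [← hinv, harc]
    ring
  rw [intervalIntegral.integral_congr hpt, intervalIntegral.integral_const_mul]
  have hcontArc : Continuous (fun x => Real.sqrt (1 - kb ^ 2 * Real.sin x ^ 2)
      * Real.arctan (Real.tan ψ / Real.sqrt (1 - kb ^ 2 * Real.sin x ^ 2))) := by
    refine (cont_sqrtDelta kb).mul (Real.continuous_arctan.comp ?_)
    refine Continuous.div continuous_const (cont_sqrtDelta kb) ?_
    exact fun x => (sqrtDelta_pos hk2 x).ne'
  rw [intervalIntegral.integral_sub (show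
      IntervalIntegrable (fun x => Real.sqrt (1 - kb ^ 2 * Real.sin x ^ 2) * (Real.pi/2)) volume 0 (Real.pi/2) by
      exact ((cont_sqrtDelta kb).mul continuous_const).intervalIntegrable 0 _)
    (hcontArc.intervalIntegrable 0 _), intervalIntegral.integral_mul_const]
  have hcE : (∫ x in (0:ℝ)..(Real.pi/2), Real.sqrt (1 - kb ^ 2 * Real.sin x ^ 2))
      = completeE kb := by
    rw [completeE, ellipticE_eq_sqrt hk2]
  rw [hcE, hβ, hkb', J_val hk0 hk1 hψ0 hψ1]
  -- evaluate v at π/2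
  have hS1 : Real.sqrt (1 - kb ^ 2 * Real.sin (Real.pi/2) ^ 2) = Real.sqrt (1 - kb ^ 2) := by
    rw [Real.sin_pi_div_two]
    norm_num
  have hKpos : 0 < Real.sqrt (1 - kb ^ 2) := Real.sqrt_pos.2 hK0
  have harcK : Real.arctan (m * Real.sqrt (1 - kb ^ 2))
      = Real.pi/2 - Real.arctan (Real.tan ψ / Real.sqrt (1 - kb ^ 2)) := by
    have hxpos : 0 < Real.tan ψ / Real.sqrt (1 - kb ^ 2) := div_pos htanpos hKpos
    have hinv : (Real.tan ψ / Real.sqrt (1 - kb ^ 2))⁻¹ = m * Real.sqrt (1 - kb ^ 2) := by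
      rw [Real.tan_eq_sin_div_cos, hm]
      field_simp
    rw [← hinv, Real.arctan_inv_of_pos hxpos]
  rw [hE0, hS1, harcK, hC]
  have hwpos : 0 < Real.sqrt (1 - kb ^ 2 * Real.cos ψ ^ 2) := Real.sqrt_pos.2 (w_pos hk2 ψ)
  have hEpi : ellipticE (Real.pi/2) kb = completeE kb := rfl
  rw [hEpi]
  field_simp
  ring
end

section
/- Let k̄ and ψ be real numbers with 0 < k̄ < 1 and 0 < ψ < π/2; set k̄' = √(1 − k̄²) and β = arctan(tan ψ / k̄'). Then ∫_0^{π/2} F(u, k̄) · sin u · cos u / ( (1 − k̄² cos²ψ sin²u) · √(1 − k̄² sin²u) ) du = (1/(k̄² sin ψ cos ψ)) · [ K(k̄) · arctan(tan ψ / k̄') − (π/2)·F(β, k̄) ]. -/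
open Real intervalIntegral

open MeasureTheory Set Filter Topology
set_option maxHeartbeats 2000000



lemma aux_pos {c k : ℝ} (h : k^2 < c) (θ : ℝ) : 0 < c - k^2 * Real.sin θ ^ 2 := by
  nlinarith [Real.sin_sq_le_one θ, sq_nonneg k, sq_nonneg (Real.sin θ)]

lemma rpow_neg_half {x : ℝ} (hx : 0 < x) : x ^ (-(1:ℝ)/2) = (Real.sqrt x)⁻¹ := by
  rw [neg_div, Real.rpow_neg hx.le, Real.sqrt_eq_rpow]

lemma cont_base {c k : ℝ} : Continuous fun θ : ℝ => c - k^2 * Real.sin θ ^ 2 := by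
  fun_prop

lemma cont_inv_base {c k : ℝ} (h : k^2 < c) :
    Continuous fun θ : ℝ => (c - k^2 * Real.sin θ ^ 2)⁻¹ :=
  cont_base.inv₀ fun θ => (aux_pos h θ).ne'

lemma cont_sqrt_base {c k : ℝ} : Continuous fun θ : ℝ => Real.sqrt (c - k^2 * Real.sin θ ^ 2) :=
  Real.continuous_sqrt.comp cont_base

lemma cont_g {k : ℝ} (h : k^2 < 1) :
    Continuous fun θ : ℝ => (1 - k^2 * Real.sin θ ^ 2) ^ (-(1:ℝ)/2) := by
  have : (fun θ : ℝ => (1 - k^2 * Real.sin θ ^ 2) ^ (-(1:ℝ)/2))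
      = fun θ => (Real.sqrt (1 - k^2 * Real.sin θ ^ 2))⁻¹ := by
    funext θ; exact rpow_neg_half (aux_pos h θ)
  rw [this]
  exact cont_sqrt_base.inv₀ fun θ => (Real.sqrt_pos.2 (aux_pos h θ)).ne'

lemma ellipticF_hasDerivAt {k : ℝ} (h : k^2 < 1) (x : ℝ) :
    HasDerivAt (fun u => ellipticF u k) ((1 - k^2 * Real.sin x ^ 2) ^ (-(1:ℝ)/2)) x :=
  intervalIntegral.integral_hasDerivAt_right ((cont_g h).intervalIntegrable _ _)
    (cont_g h).aestronglyMeasurable.stronglyMeasurableAtFilter (cont_g h).continuousAt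



lemma std_integral {k c : ℝ} (hc0 : 0 < c) (hc : k^2 < c) :
    ∫ θ in (0:ℝ)..(π/2), (c - k^2 * Real.sin θ ^ 2)⁻¹
      = π / (2 * Real.sqrt (c * (c - k^2))) := by
  set m := Real.sqrt ((c - k^2)/c) with hm_def
  set s := Real.sqrt (c * (c - k^2)) with hs_def
  have hck : 0 < c - k^2 := by linarith
  have hm0 : 0 < m := Real.sqrt_pos.2 (by positivity)
  have hm2 : m^2 = (c - k^2)/c := Real.sq_sqrt (by positivity)
  have hs0 : 0 < s := Real.sqrt_pos.2 (by positivity)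
  have hms : m * c = s := by
    have h1 : c * (c - k^2) = (m * c)^2 := by
      rw [mul_pow, hm2]; field_simp
    rw [hs_def, h1, Real.sqrt_sq (by positivity)]
  set G : ℝ → ℝ := fun b => s⁻¹ * Real.arctan (m * Real.tan b) with hG_def
  have hGderiv : ∀ x ∈ Ioo (-(π/2)) (π/2),
      HasDerivAt G ((c - k^2 * Real.sin x ^ 2)⁻¹) x := by
    intro x hx
    have hcos : Real.cos x ≠ 0 := (Real.cos_pos_of_mem_Ioo hx).ne'
    have h1 : HasDerivAt (fun b => m * Real.tan b) (m * (1 / Real.cos x ^ 2)) x :=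
      (Real.hasDerivAt_tan hcos).const_mul m
    have h2 := (h1.arctan).const_mul s⁻¹
    refine h2.congr_deriv ?_
    symm
    have hbase := aux_pos hc x
    have hsin : Real.sin x ^ 2 = 1 - Real.cos x ^ 2 := by
      have := Real.sin_sq_add_cos_sq x; linarith
    have hc2 : Real.cos x ^ 2 ≠ 0 := pow_ne_zero _ hcos
    have hsq : (m * Real.tan x)^2 = (c - k^2) * Real.sin x ^ 2 / (c * Real.cos x ^ 2) := by
      rw [mul_pow, hm2, Real.tan_eq_sin_div_cos, div_pow]; ring
    have key : 1 + (m * Real.tan x)^2 = (c - k^2 * Real.sin x ^ 2)/(c * Real.cos x ^ 2) := by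
      rw [hsq]
      field_simp
      nlinarith [Real.sin_sq_add_cos_sq x]
    rw [key, ← hms]
    rw [eq_comm]
    field_simp
  have hfc : Continuous fun θ : ℝ => (c - k^2 * Real.sin θ ^ 2)⁻¹ := cont_inv_base hc
  have hseg : ∀ b ∈ Ioo (0:ℝ) (π/2), (∫ θ in (0:ℝ)..b, (c - k^2 * Real.sin θ ^ 2)⁻¹) = G b := by
    intro b hb
    have hsub : uIcc (0:ℝ) b ⊆ Ioo (-(π/2)) (π/2) := by
      rw [uIcc_of_le hb.1.le]
      intro x hx
      exact ⟨by linarith [hx.1, Real.pi_pos], lt_of_le_of_lt hx.2 hb.2⟩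
    have := intervalIntegral.integral_eq_sub_of_hasDerivAt
      (fun x hx => hGderiv x (hsub hx)) (hfc.intervalIntegrable 0 b)
    rw [this, hG_def]
    simp [Real.tan_zero, Real.arctan_zero]
  -- limit of LHS
  set Φ : ℝ → ℝ := fun b => ∫ θ in (0:ℝ)..b, (c - k^2 * Real.sin θ ^ 2)⁻¹ with hΦ
  have hΦcont : ContinuousAt Φ (π/2) :=
    (intervalIntegral.integral_hasDerivAt_right (hfc.intervalIntegrable _ _)
      hfc.aestronglyMeasurable.stronglyMeasurableAtFilter hfc.continuousAt).continuousAt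
  have hlim1 : Tendsto Φ (𝓝[<] (π/2)) (𝓝 (Φ (π/2))) :=
    hΦcont.tendsto.mono_left nhdsWithin_le_nhds
  have hlim2 : Tendsto G (𝓝[<] (π/2)) (𝓝 (s⁻¹ * (π/2))) := by
    have htan : Tendsto Real.tan (𝓝[<] (π/2)) atTop := Real.tendsto_tan_pi_div_two
    have h3 : Tendsto (fun b => m * Real.tan b) (𝓝[<] (π/2)) atTop :=
      htan.const_mul_atTop hm0
    have h4 : Tendsto (fun b => Real.arctan (m * Real.tan b)) (𝓝[<] (π/2)) (𝓝 (π/2)) :=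
      (Real.tendsto_arctan_atTop.mono_right nhdsWithin_le_nhds).comp h3
    exact (h4.const_mul s⁻¹)
  have heq : Φ =ᶠ[𝓝[<] (π/2)] G := by
    filter_upwards [Ioo_mem_nhdsLT_of_mem (⟨by positivity, le_refl _⟩ :
      (π/2) ∈ Ioc (0:ℝ) (π/2))] with b hb
    exact hseg b hb
  have hfin : Φ (π/2) = s⁻¹ * (π/2) := tendsto_nhds_unique (hlim1.congr' heq) hlim2
  show Φ (π/2) = π / (2 * s)
  rw [hfin]
  field_simp



lemma core_identity {k : ℝ} (hk0 : 0 < k) (hk1 : k < 1) {ψ : ℝ} (hψ0 : 0 ≤ ψ)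
    (hψ1 : ψ < π/2) :
    (∫ θ in (0:ℝ)..(π/2), (1 - k^2 * Real.sin θ ^ 2) ^ (-(1:ℝ)/2)
        * Real.arctan (Real.tan ψ / Real.sqrt (1 - k^2 * Real.sin θ ^ 2)))
      = π/2 * ellipticF (Real.arctan (Real.tan ψ / Real.sqrt (1 - k^2))) k := by
  have hk2 : k^2 < 1 := by nlinarith
  have hk'0 : 0 < Real.sqrt (1 - k^2) := Real.sqrt_pos.2 (by linarith)
  set k' : ℝ := Real.sqrt (1 - k^2) with hk'_def
  have hk'2 : k'^2 = 1 - k^2 := Real.sq_sqrt (by linarith)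
  -- the two functions of ψ
  set I : ℝ → ℝ := fun x => ∫ θ in (0:ℝ)..(π/2), (1 - k^2 * Real.sin θ ^ 2) ^ (-(1:ℝ)/2)
      * Real.arctan (Real.tan x / Real.sqrt (1 - k^2 * Real.sin θ ^ 2)) with hI_def
  set R : ℝ → ℝ := fun x => π/2 * ellipticF (Real.arctan (Real.tan x / k')) k with hR_def
  -- derivative claim
  have main : ∀ x₀ ∈ Icc 0 ψ, HasDerivAt (fun x => I x - R x) 0 x₀ := by
    intro x₀ hx₀
    have hx₀2 : x₀ ≤ ψ := hx₀.2
    have hx₀1 : x₀ < π/2 := lt_of_le_of_lt hx₀.2 hψ1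
    have hx₀0 : (0:ℝ) ≤ x₀ := hx₀.1
    have hcosx₀ : 0 < Real.cos x₀ :=
      Real.cos_pos_of_mem_Ioo ⟨by linarith [Real.pi_pos], hx₀1⟩
    set t : ℝ := Real.tan x₀ with ht_def
    set c : ℝ := 1 + t^2 with hc_def
    have hc0 : (0:ℝ) < c := by positivity
    have hc1 : (1:ℝ) ≤ c := by nlinarith
    have hck : k^2 < c := by nlinarith
    have hc_cos : c = (Real.cos x₀ ^ 2)⁻¹ := by
      rw [hc_def, ht_def, ← Real.inv_one_add_tan_sq hcosx₀.ne', inv_inv]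
    -- derivative of I via dominated convergence
    set ε : ℝ := (π/2 - ψ)/2 with hε_def
    have hε0 : 0 < ε := by rw [hε_def]; linarith
    set c₀ : ℝ := (ψ + π/2)/2 with hc₀_def
    have hc₀ : c₀ < π/2 := by rw [hc₀_def]; linarith
    have hball : ∀ x ∈ Metric.ball x₀ ε, -(π/2) < x ∧ x < c₀ := by
      intro x hx
      rw [Metric.mem_ball, Real.dist_eq, abs_lt] at hx
      constructor
      · nlinarith [Real.pi_pos]
      · rw [hc₀_def]; rw [hε_def] at hx; nlinarith [hx.1, hx.2]
    have hcoslb : ∀ x ∈ Metric.ball x₀ ε, Real.cos c₀ ≤ Real.cos x ∧ 0 < Real.cos x := by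
      intro x hx
      obtain ⟨h1, h2⟩ := hball x hx
      have hpos : 0 < Real.cos x := Real.cos_pos_of_mem_Ioo ⟨h1, h2.trans hc₀⟩
      constructor
      · rcases le_or_gt 0 x with h3 | h3
        · exact Real.cos_le_cos_of_nonneg_of_le_pi (by linarith) (by linarith [Real.pi_pos]) h2.le
        · have : Real.cos x = Real.cos (-x) := (Real.cos_neg x).symm
          rw [this]
          apply Real.cos_le_cos_of_nonneg_of_le_pi (by linarith) (by linarith [Real.pi_pos])
          rw [Metric.mem_ball, Real.dist_eq, abs_lt, hε_def] at hx
          rw [hc₀_def]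
          nlinarith [hx.1, hx.2]
      · exact hpos
    have hcosc₀ : 0 < Real.cos c₀ :=
      Real.cos_pos_of_mem_Ioo ⟨by nlinarith [Real.pi_pos], hc₀⟩
    -- the parametric derivative
    set F' : ℝ → ℝ → ℝ := fun x θ => (1 - k^2 * Real.sin θ ^ 2) ^ (-(1:ℝ)/2) *
        ((1 / Real.cos x ^ 2 / Real.sqrt (1 - k^2 * Real.sin θ ^ 2)) /
          (1 + (Real.tan x / Real.sqrt (1 - k^2 * Real.sin θ ^ 2))^2)) with hF'_def
    have hIderiv : HasDerivAt I (∫ θ in (0:ℝ)..(π/2), F' x₀ θ) x₀ := by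
      have hgab : ∀ x : ℝ, Continuous fun θ : ℝ => (1 - k^2 * Real.sin θ ^ 2) ^ (-(1:ℝ)/2)
          * Real.arctan (Real.tan x / Real.sqrt (1 - k^2 * Real.sin θ ^ 2)) := by
        intro x
        apply (cont_g hk2).mul
        apply Real.continuous_arctan.comp
        apply Continuous.div continuous_const cont_sqrt_base
        intro θ
        exact (Real.sqrt_pos.2 (aux_pos hk2 θ)).ne'
      have hF'cont : ∀ x : ℝ, Real.cos x ≠ 0 → Continuous (F' x) := by
        intro x hcx
        apply (cont_g hk2).mul
        apply Continuous.div
        · exact Continuous.div continuous_const cont_sqrt_base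
            (fun θ => (Real.sqrt_pos.2 (aux_pos hk2 θ)).ne')
        · apply Continuous.add continuous_const
          exact (Continuous.div continuous_const cont_sqrt_base
            (fun θ => (Real.sqrt_pos.2 (aux_pos hk2 θ)).ne')).pow 2
        · intro θ
          positivity
      have := intervalIntegral.hasDerivAt_integral_of_dominated_loc_of_deriv_le
        (F := fun x θ => (1 - k^2 * Real.sin θ ^ 2) ^ (-(1:ℝ)/2)
          * Real.arctan (Real.tan x / Real.sqrt (1 - k^2 * Real.sin θ ^ 2)))
        (F' := F') (x₀ := x₀) (a := (0:ℝ)) (b := π/2) (μ := volume)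
        (bound := fun _ => (1 - k^2)⁻¹ * (Real.cos c₀ ^ 2)⁻¹) (Metric.ball_mem_nhds x₀ hε0)
        ?_ ?_ ?_ ?_ ?_ ?_
      · exact this.2
      · filter_upwards with x
        exact (hgab x).aestronglyMeasurable
      · exact (hgab x₀).intervalIntegrable _ _
      · exact (hF'cont x₀ hcosx₀.ne').aestronglyMeasurable
      · filter_upwards with θ _ x hx
        obtain ⟨hle, hpos⟩ := hcoslb x hx
        have hbθ : 0 < 1 - k^2 * Real.sin θ ^ 2 := aux_pos hk2 θ
        have hsq : 0 < Real.sqrt (1 - k^2 * Real.sin θ ^ 2) := Real.sqrt_pos.2 hbθ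
        have hsq2 : Real.sqrt (1 - k^2 * Real.sin θ ^ 2) ^ 2 = 1 - k^2 * Real.sin θ ^ 2 :=
          Real.sq_sqrt hbθ.le
        have hrw : (1 - k^2 * Real.sin θ ^ 2) ^ (-(1:ℝ)/2)
            = (Real.sqrt (1 - k^2 * Real.sin θ ^ 2))⁻¹ := rpow_neg_half hbθ
        rw [hF'_def]
        simp only [Real.norm_eq_abs]
        rw [abs_of_nonneg (by positivity)]
        have h1 : (1:ℝ) ≤ 1 + (Real.tan x / Real.sqrt (1 - k^2 * Real.sin θ ^ 2))^2 := by
          nlinarith [sq_nonneg (Real.tan x / Real.sqrt (1 - k^2 * Real.sin θ ^ 2))]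
        have hb1 : 1 - k^2 * Real.sin θ ^ 2 ≤ 1 := by nlinarith [sq_nonneg (Real.sin θ), sq_nonneg k]
        have hble : 1 - k^2 ≤ 1 - k^2 * Real.sin θ ^ 2 := by
          nlinarith [Real.sin_sq_le_one θ, sq_nonneg k]
        have hcos2 : Real.cos c₀ ^ 2 ≤ Real.cos x ^ 2 := by nlinarith
        calc (1 - k^2 * Real.sin θ ^ 2) ^ (-(1:ℝ)/2) *
            ((1 / Real.cos x ^ 2 / Real.sqrt (1 - k^2 * Real.sin θ ^ 2)) /
              (1 + (Real.tan x / Real.sqrt (1 - k^2 * Real.sin θ ^ 2))^2))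
            ≤ (1 - k^2 * Real.sin θ ^ 2) ^ (-(1:ℝ)/2) *
              (1 / Real.cos x ^ 2 / Real.sqrt (1 - k^2 * Real.sin θ ^ 2)) := by
              apply mul_le_mul_of_nonneg_left _ (by positivity)
              apply div_le_self (by positivity) h1
          _ = (1 - k^2 * Real.sin θ ^ 2)⁻¹ * (Real.cos x ^ 2)⁻¹ := by
              rw [hrw]
              rw [← hsq2]
              field_simp
              rw [Real.sqrt_sq hsq.le]
          _ ≤ (1 - k^2)⁻¹ * (Real.cos c₀ ^ 2)⁻¹ := by
              apply mul_le_mul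
              · exact inv_anti₀ (by linarith) hble
              · exact inv_anti₀ (pow_pos hcosc₀ 2) hcos2
              · exact inv_nonneg.2 (sq_nonneg _)
              · exact inv_nonneg.2 (by linarith)
      · exact intervalIntegrable_const
      · filter_upwards with θ _ x hx
        obtain ⟨hle, hpos⟩ := hcoslb x hx
        have hbθ : 0 < 1 - k^2 * Real.sin θ ^ 2 := aux_pos hk2 θ
        have hsq : Real.sqrt (1 - k^2 * Real.sin θ ^ 2) ≠ 0 := (Real.sqrt_pos.2 hbθ).ne'
        have h1 : HasDerivAt (fun x => Real.tan x / Real.sqrt (1 - k^2 * Real.sin θ ^ 2))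
            (1 / Real.cos x ^ 2 / Real.sqrt (1 - k^2 * Real.sin θ ^ 2)) x :=
          (Real.hasDerivAt_tan hpos.ne').div_const _
        have h2 := (h1.arctan).const_mul ((1 - k^2 * Real.sin θ ^ 2) ^ (-(1:ℝ)/2))
        refine h2.congr_deriv ?_
        symm
        simp only [hF'_def]
        ring
    -- compute the derivative of I
    have hIval : (∫ θ in (0:ℝ)..(π/2), F' x₀ θ) = c * (π / (2 * Real.sqrt (c * (c - k^2)))) := by
      have : ∀ θ : ℝ, F' x₀ θ = c * (c - k^2 * Real.sin θ ^ 2)⁻¹ := by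
        intro θ
        have hbθ : 0 < 1 - k^2 * Real.sin θ ^ 2 := aux_pos hk2 θ
        have hsq0 : 0 < Real.sqrt (1 - k^2 * Real.sin θ ^ 2) := Real.sqrt_pos.2 hbθ
        have hsq2 : Real.sqrt (1 - k^2 * Real.sin θ ^ 2) ^ 2 = 1 - k^2 * Real.sin θ ^ 2 :=
          Real.sq_sqrt hbθ.le
        have hrw : (1 - k^2 * Real.sin θ ^ 2) ^ (-(1:ℝ)/2)
            = (Real.sqrt (1 - k^2 * Real.sin θ ^ 2))⁻¹ := rpow_neg_half hbθ
        have hckθ : 0 < c - k^2 * Real.sin θ ^ 2 := aux_pos hck θ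
        rw [hF'_def]
        simp only
        rw [hrw]
        rw [show (1:ℝ) / Real.cos x₀ ^ 2 = c by rw [hc_cos, one_div]]
        rw [show Real.tan x₀ = t from ht_def.symm]
        set sb := Real.sqrt (1 - k^2 * Real.sin θ ^ 2) with hsb_def
        have e1 : 1 + (t/sb)^2 = (c - k^2 * Real.sin θ ^ 2)/sb^2 := by
          rw [div_pow]
          field_simp
          linear_combination hsq2 - hc_def
        rw [e1]
        rw [eq_comm]
        field_simp
      rw [intervalIntegral.integral_congr (fun θ _ => this θ)]
      rw [intervalIntegral.integral_const_mul, std_integral hc0 hck]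
    -- derivative of R
    set b : ℝ := Real.arctan (t / k') with hb_def
    have hinner : HasDerivAt (fun x => Real.arctan (Real.tan x / k'))
        (1/(1 + (t/k')^2) * (1 / Real.cos x₀ ^ 2 / k')) x₀ :=
      ((Real.hasDerivAt_tan hcosx₀.ne').div_const k').arctan
    have hRd : HasDerivAt R
        (π/2 * ((1 - k^2 * Real.sin b ^ 2) ^ (-(1:ℝ)/2)
          * (1/(1 + (t/k')^2) * (1 / Real.cos x₀ ^ 2 / k')))) x₀ := by
      have hcomp := ((ellipticF_hasDerivAt hk2 b).comp x₀ hinner)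
      have := hcomp.const_mul (π/2)
      exact this
    -- the two derivatives agree
    set A : ℝ := Real.sqrt (c - k^2) with hA_def
    set S : ℝ := Real.sqrt c with hS_def
    have hA0 : 0 < A := Real.sqrt_pos.2 (by linarith)
    have hS0 : 0 < S := Real.sqrt_pos.2 hc0
    have hA2 : A^2 = c - k^2 := Real.sq_sqrt (by linarith)
    have hS2 : S^2 = c := Real.sq_sqrt hc0.le
    have hsqrtmul : Real.sqrt (c * (c - k^2)) = S * A := Real.sqrt_mul hc0.le _
    have hk't : k'^2 + t^2 = c - k^2 := by rw [hk'2, hc_def]; ring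
    have hsinb : Real.sin b ^ 2 = t^2/(k'^2 + t^2) := by
      have hk'ne : k' ≠ 0 := hk'0.ne'
      rw [hb_def, Real.sin_arctan, div_pow, Real.sq_sqrt (by positivity), div_pow]
      field_simp
    have h1b : 1 - k^2 * Real.sin b ^ 2 = (k' * S / A)^2 := by
      rw [hsinb, div_pow, mul_pow, hS2, hA2, ← hk't]
      have hden : k'^2 + t^2 ≠ 0 := by rw [hk't]; linarith
      field_simp
      linear_combination (-(t^2)) * hk'2
    have hrpowb : (1 - k^2 * Real.sin b ^ 2) ^ (-(1:ℝ)/2) = A / (k' * S) := by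
      rw [h1b, rpow_neg_half (by positivity), Real.sqrt_sq (by positivity)]
      rw [inv_div]
    have hderiv_eq : π/2 * ((1 - k^2 * Real.sin b ^ 2) ^ (-(1:ℝ)/2)
          * (1/(1 + (t/k')^2) * (1 / Real.cos x₀ ^ 2 / k')))
        = c * (π / (2 * Real.sqrt (c * (c - k^2)))) := by
      rw [hrpowb, hsqrtmul]
      rw [show (1:ℝ) / Real.cos x₀ ^ 2 = c by rw [hc_cos, one_div]]
      have h2 : 1 + (t/k')^2 = A^2/k'^2 := by
        rw [div_pow, hA2, ← hk't]; field_simp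
      rw [h2]
      field_simp
    -- combine
    have hfinal := hIderiv.sub hRd
    rw [hIval, hderiv_eq] at hfinal
    simp only [sub_self] at hfinal
    exact hfinal
  -- conclude by the constancy principle
  have hconst := constant_of_has_deriv_right_zero
    (f := fun x => I x - R x) (a := 0) (b := ψ)
    (fun x hx => ((main x hx).continuousAt).continuousWithinAt)
    (fun x hx => ((main x ⟨hx.1, hx.2.le⟩).hasDerivWithinAt))
  have hψmem : ψ ∈ Icc (0:ℝ) ψ := ⟨hψ0, le_refl ψ⟩
  have hJ := hconst ψ hψmem
  have hI0 : I 0 = 0 := by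
    rw [hI_def]
    simp [Real.tan_zero]
  have hR0 : R 0 = 0 := by
    rw [hR_def]
    simp [Real.tan_zero, ellipticF]
  have hJ' : I ψ - R ψ = I 0 - R 0 := hJ
  rw [hI0, hR0, sub_zero] at hJ'
  have : I ψ = R ψ := by linarith [hJ']
  exact this




theorem stmt_14 (kb ψ : ℝ) (hk0 : 0 < kb) (hk1 : kb < 1)
    (hψ0 : 0 < ψ) (hψ1 : ψ < Real.pi / 2)
    (kb' β : ℝ) (hkb' : kb' = Real.sqrt (1 - kb ^ 2))
    (hβ : β = Real.arctan (Real.tan ψ / kb')) :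
    (∫ u in (0:ℝ)..(Real.pi / 2),
        ellipticF u kb * Real.sin u * Real.cos u /
          ((1 - kb ^ 2 * Real.cos ψ ^ 2 * Real.sin u ^ 2)
            * Real.sqrt (1 - kb ^ 2 * Real.sin u ^ 2)))
      = 1 / (kb ^ 2 * Real.sin ψ * Real.cos ψ) *
          (completeK kb * Real.arctan (Real.tan ψ / kb')
            - Real.pi / 2 * ellipticF β kb) := by
  have hk2 : kb^2 < 1 := by nlinarith
  have hsψ : 0 < Real.sin ψ := Real.sin_pos_of_pos_of_lt_pi hψ0 (by linarith [Real.pi_pos])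
  have hcψ : 0 < Real.cos ψ := Real.cos_pos_of_mem_Ioo ⟨by linarith [Real.pi_pos], hψ1⟩
  have htψ : 0 < Real.tan ψ := by
    rw [Real.tan_eq_sin_div_cos]; positivity
  set P : ℝ := kb^2 * Real.sin ψ * Real.cos ψ with hP_def
  have hP0 : 0 < P := by positivity
  set m : ℝ := Real.cos ψ / Real.sin ψ with hm_def
  have hm0 : 0 < m := by positivity
  have hkc : kb^2 * Real.cos ψ ^ 2 < 1 := by
    nlinarith [Real.sin_sq_add_cos_sq ψ, sq_nonneg (Real.sin ψ), sq_nonneg kb]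
  have hden1 : ∀ u : ℝ, 0 < 1 - kb^2 * Real.cos ψ ^ 2 * Real.sin u ^ 2 := by
    intro u
    have := aux_pos (k := kb * Real.cos ψ) (c := 1) (by nlinarith [mul_pow kb (Real.cos ψ) 2]) u
    nlinarith [this]
  have hΔpos : ∀ u : ℝ, 0 < Real.sqrt (1 - kb^2 * Real.sin u ^ 2) :=
    fun u => Real.sqrt_pos.2 (aux_pos hk2 u)
  set v : ℝ → ℝ := fun u => -(P⁻¹) * Real.arctan (m * Real.sqrt (1 - kb^2 * Real.sin u ^ 2))
    with hv_def
  set w : ℝ → ℝ := fun u => Real.sin u * Real.cos u /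
      ((1 - kb^2 * Real.cos ψ ^ 2 * Real.sin u ^ 2) * Real.sqrt (1 - kb^2 * Real.sin u ^ 2))
    with hw_def
  -- derivative of v
  have hv : ∀ u : ℝ, HasDerivAt v (w u) u := by
    intro u
    have hs : HasDerivAt (fun x : ℝ => 1 - kb^2 * Real.sin x ^ 2)
        (-(kb^2 * (2 * Real.sin u * Real.cos u))) u := by
      have h1 := ((Real.hasDerivAt_sin u).pow 2).const_mul (kb^2)
      have h2 := h1.const_sub 1
      refine h2.congr_deriv ?_
      symm
      ring
    have hsq := hs.sqrt (aux_pos hk2 u).ne'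
    have h3 := (hsq.const_mul m).arctan
    have h4 := h3.const_mul (-(P⁻¹))
    refine h4.congr_deriv ?_
    symm
    rw [hw_def]
    simp only
    set d : ℝ := Real.sqrt (1 - kb^2 * Real.sin u ^ 2) with hd_def
    have hd0 : 0 < d := hΔpos u
    have hd2 : d^2 = 1 - kb^2 * Real.sin u ^ 2 := Real.sq_sqrt (aux_pos hk2 u).le
    have hden := hden1 u
    rw [hm_def, hP_def]
    rw [eq_comm]
    field_simp
    linear_combination (-(Real.sin u*Real.cos u)) * Real.cos ψ^2 * hd2
      + (-(Real.sin u*Real.cos u)) * (Real.sin_sq_add_cos_sq ψ)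
  -- continuity facts
  have hwcont : Continuous w := by
    rw [hw_def]
    apply Continuous.div
    · exact Real.continuous_sin.mul Real.continuous_cos
    · apply Continuous.mul
      · fun_prop
      · exact cont_sqrt_base
    · intro x
      exact (mul_pos (hden1 x) (hΔpos x)).ne'
  have hvcont : Continuous v := continuous_iff_continuousAt.2 fun x => (hv x).continuousAt
  have hucont : Continuous fun x => ellipticF x kb :=
    continuous_iff_continuousAt.2 fun x => (ellipticF_hasDerivAt hk2 x).continuousAt
  -- integration by parts
  have parts := intervalIntegral.integral_mul_deriv_eq_deriv_mul_of_hasDerivAt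
    (a := (0:ℝ)) (b := π/2) (u := fun x => ellipticF x kb) (v := v)
    (u' := fun x => (1 - kb^2 * Real.sin x ^ 2) ^ (-(1:ℝ)/2)) (v' := w)
    hucont.continuousOn hvcont.continuousOn
    (fun x _ => ellipticF_hasDerivAt hk2 x) (fun x _ => hv x)
    ((cont_g hk2).intervalIntegrable _ _) (hwcont.intervalIntegrable _ _)
  have hLHS : (∫ u in (0:ℝ)..(Real.pi / 2),
        ellipticF u kb * Real.sin u * Real.cos u /
          ((1 - kb ^ 2 * Real.cos ψ ^ 2 * Real.sin u ^ 2)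
            * Real.sqrt (1 - kb ^ 2 * Real.sin u ^ 2)))
      = ∫ x in (0:ℝ)..(π/2), ellipticF x kb * w x := by
    apply intervalIntegral.integral_congr
    intro x _
    rw [hw_def]
    simp only
    ring
  -- boundary terms
  have hF0 : ellipticF 0 kb = 0 := by simp [ellipticF]
  have hk'pos : 0 < Real.sqrt (1 - kb^2) := Real.sqrt_pos.2 (by linarith)
  have harct : ∀ d : ℝ, 0 < d → Real.arctan (m * d) = π/2 - Real.arctan (Real.tan ψ / d) := by
    intro d hd
    have h1 : m * d = (Real.tan ψ / d)⁻¹ := by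
      rw [hm_def, Real.tan_eq_sin_div_cos]
      field_simp
    rw [h1, Real.arctan_inv_of_pos (div_pos htψ hd)]
  have hvhalf : v (π/2) = -(P⁻¹) * (π/2 - Real.arctan (Real.tan ψ / Real.sqrt (1 - kb^2))) := by
    rw [hv_def]
    simp only [Real.sin_pi_div_two, one_pow, mul_one]
    rw [harct _ hk'pos]
  -- the remaining integral
  have hgarct : (∫ x in (0:ℝ)..(π/2), (1 - kb^2 * Real.sin x ^ 2) ^ (-(1:ℝ)/2)
        * Real.arctan (Real.tan ψ / Real.sqrt (1 - kb^2 * Real.sin x ^ 2)))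
      = π/2 * ellipticF (Real.arctan (Real.tan ψ / Real.sqrt (1 - kb^2))) kb :=
    core_identity hk0 hk1 hψ0.le hψ1
  have hgarct_cont : Continuous fun x : ℝ => (1 - kb^2 * Real.sin x ^ 2) ^ (-(1:ℝ)/2)
      * Real.arctan (Real.tan ψ / Real.sqrt (1 - kb^2 * Real.sin x ^ 2)) := by
    apply (cont_g hk2).mul
    apply Real.continuous_arctan.comp
    exact Continuous.div continuous_const cont_sqrt_base fun x => (hΔpos x).ne'
  have hKdef : (∫ x in (0:ℝ)..(π/2), (1 - kb^2 * Real.sin x ^ 2) ^ (-(1:ℝ)/2))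
      = completeK kb := rfl
  have hgv : (∫ x in (0:ℝ)..(π/2), (1 - kb^2 * Real.sin x ^ 2) ^ (-(1:ℝ)/2) * v x)
      = -(P⁻¹) * (π/2 * completeK kb
          - π/2 * ellipticF (Real.arctan (Real.tan ψ / Real.sqrt (1 - kb^2))) kb) := by
    have step1 : (∫ x in (0:ℝ)..(π/2), (1 - kb^2 * Real.sin x ^ 2) ^ (-(1:ℝ)/2) * v x)
        = ∫ x in (0:ℝ)..(π/2), -(P⁻¹) * ((π/2) * ((1 - kb^2 * Real.sin x ^ 2) ^ (-(1:ℝ)/2))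
            - (1 - kb^2 * Real.sin x ^ 2) ^ (-(1:ℝ)/2)
              * Real.arctan (Real.tan ψ / Real.sqrt (1 - kb^2 * Real.sin x ^ 2))) := by
      apply intervalIntegral.integral_congr
      intro x _
      rw [hv_def]
      simp only
      rw [harct _ (hΔpos x)]
      ring
    rw [step1, intervalIntegral.integral_const_mul]
    rw [intervalIntegral.integral_sub
      (((cont_g hk2).const_mul (π/2)).intervalIntegrable _ _)
      (hgarct_cont.intervalIntegrable _ _)]
    rw [intervalIntegral.integral_const_mul, hKdef, hgarct]
  -- put everything together
  rw [hLHS, parts]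
  beta_reduce
  rw [hgv, hF0, hvhalf]
  rw [show ellipticF (π/2) kb = completeK kb from rfl]
  rw [← hkb', ← hβ]
  have hPne : P ≠ 0 := hP0.ne'
  rw [hP_def] at *
  field_simp
  ring
end

section
/- Let e₁ and e₂ be real numbers with 0 < e₂ < e₁ < 1, and set φ = arcsin e₁ and k = e₂/e₁. Then the iterated integral ∫_0^{π/2} ∫_0^{π/2} sin θ · √( 1 − (e₁² cos²φ' + e₂² sin²φ') sin²θ ) dθ dφ' equals (π/4) · [ √((1 − e₁²)(1 − e₂²)) + e₁ · E(φ, k) + ((1 − e₁²)/e₁) · F(φ, k) ]. (This is the Legendre surface area formula for an ellipsoid with semi-axes a > b > c > 0 and eccentricities e₁² = (a² − c²)/a², e₂² = (b² − c²)/b², stated as an identity between a double integral and elliptic integrals.) -/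
open Real intervalIntegral

open MeasureTheory Set Filter Topology

lemma contE {k : ℝ} : Continuous (fun θ : ℝ => (1 - k^2*Real.sin θ^2) ^ ((1:ℝ)/2)) := by
  apply Continuous.rpow_const (by continuity)
  intro x; right; norm_num

lemma contF {k : ℝ} (hk : k^2 < 1) :
    Continuous (fun θ : ℝ => (1 - k^2*Real.sin θ^2) ^ (-(1:ℝ)/2)) := by
  apply Continuous.rpow_const (by continuity)
  intro x; left
  nlinarith [Real.sin_sq_le_one x, sq_nonneg (k*Real.sin x), sq_nonneg (Real.sin x), sq_nonneg k]

lemma hasDerivAt_ellipticE {k : ℝ} (ψ : ℝ) :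
    HasDerivAt (fun ψ => ellipticE ψ k) ((1 - k^2*Real.sin ψ^2) ^ ((1:ℝ)/2)) ψ := by
  have h := intervalIntegral.integral_hasDerivAt_right
    ((contE (k := k)).intervalIntegrable 0 ψ)
    ((contE (k := k)).stronglyMeasurableAtFilter _ _) contE.continuousAt
  simpa [ellipticE] using h

lemma hasDerivAt_ellipticF {k : ℝ} (hk : k^2 < 1) (ψ : ℝ) :
    HasDerivAt (fun ψ => ellipticF ψ k) ((1 - k^2*Real.sin ψ^2) ^ (-(1:ℝ)/2)) ψ := by
  have h := intervalIntegral.integral_hasDerivAt_right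
    ((contF hk).intervalIntegrable 0 ψ)
    ((contF hk).stronglyMeasurableAtFilter _ _) (contF hk).continuousAt
  simpa [ellipticF] using h

lemma lemC {e₁ e₂ : ℝ} (h0 : 0 < e₂) (h21 : e₂ < e₁) (h11 : e₁ < 1) {t : ℝ}
    (ht0 : 0 < t) (ht1 : t ≤ 1) :
    HasDerivAt (fun t => Real.pi/4 * ((Real.sqrt (1-e₁^2*t^2) * Real.sqrt (1-e₂^2*t^2) - 1)/t
        + e₁ * ellipticE (Real.arcsin (e₁*t)) (e₂/e₁)
        + (1-e₁^2)/e₁ * ellipticF (Real.arcsin (e₁*t)) (e₂/e₁)))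
      (Real.pi/(4*t^2) - (1-t^2) * Real.pi
        /(4*t^2*(Real.sqrt (1-e₁^2*t^2) * Real.sqrt (1-e₂^2*t^2)))) t := by
  have he1 : 0 < e₁ := h0.trans h21
  have hk2 : (e₂/e₁)^2 < 1 := by
    rw [div_pow, div_lt_one (by positivity)]
    nlinarith
  have ht2 : t^2 ≤ 1 := by nlinarith
  have he12 : e₁^2 < 1 := by nlinarith
  have he22 : e₂^2 < 1 := by nlinarith
  have hP0 : 0 < 1 - e₁^2*t^2 := by nlinarith [mul_le_mul_of_nonneg_left ht2 (sq_nonneg e₁)]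
  have hQ0 : 0 < 1 - e₂^2*t^2 := by nlinarith [mul_le_mul_of_nonneg_left ht2 (sq_nonneg e₂)]
  have hPs := Real.sqrt_pos.2 hP0
  have hQs := Real.sqrt_pos.2 hQ0
  have hP2 : Real.sqrt (1-e₁^2*t^2)^2 = 1-e₁^2*t^2 := Real.sq_sqrt hP0.le
  have hQ2 : Real.sqrt (1-e₂^2*t^2)^2 = 1-e₂^2*t^2 := Real.sq_sqrt hQ0.le
  have hdP : HasDerivAt (fun t : ℝ => Real.sqrt (1-e₁^2*t^2))
      (-(e₁^2*(2*t))/(2*Real.sqrt (1-e₁^2*t^2))) t := by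
    refine HasDerivAt.sqrt ?_ hP0.ne'
    simpa using ((hasDerivAt_pow 2 t).const_mul (e₁^2)).const_sub 1
  have hdQ : HasDerivAt (fun t : ℝ => Real.sqrt (1-e₂^2*t^2))
      (-(e₂^2*(2*t))/(2*Real.sqrt (1-e₂^2*t^2))) t := by
    refine HasDerivAt.sqrt ?_ hQ0.ne'
    simpa using ((hasDerivAt_pow 2 t).const_mul (e₂^2)).const_sub 1
  have hdel := ((hdP.mul hdQ).sub_const 1).div (hasDerivAt_id t) ht0.ne'
  have harc : HasDerivAt (fun t : ℝ => Real.arcsin (e₁*t))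
      (1/Real.sqrt (1-e₁^2*t^2) * e₁) t := by
    have h1 : e₁*t ≠ -1 := by nlinarith
    have h2 : e₁*t ≠ 1 := by nlinarith
    have := (Real.hasDerivAt_arcsin h1 h2).comp t ((hasDerivAt_id t).const_mul e₁)
    refine this.congr_deriv ?_
    simp [show 1-(e₁*t)^2 = 1-e₁^2*t^2 by ring]
  have hsin : Real.sin (Real.arcsin (e₁*t)) = e₁*t := Real.sin_arcsin (by nlinarith) (by nlinarith)
  have hkk : 1 - (e₂/e₁)^2 * Real.sin (Real.arcsin (e₁*t))^2 = 1 - e₂^2*t^2 := by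
    rw [hsin]; field_simp
  have hdE := ((hasDerivAt_ellipticE (k := e₂/e₁) (Real.arcsin (e₁*t))).comp t harc).const_mul e₁
  have hdF := ((hasDerivAt_ellipticF hk2 (Real.arcsin (e₁*t))).comp t harc).const_mul ((1-e₁^2)/e₁)
  rw [hkk, ← Real.sqrt_eq_rpow] at hdE
  rw [hkk, show (-(1:ℝ)/2) = -((1:ℝ)/2) by norm_num, Real.rpow_neg hQ0.le,
    ← Real.sqrt_eq_rpow] at hdF
  have hall := ((hdel.add hdE).add hdF).const_mul (Real.pi/4)
  refine hall.congr_deriv (Eq.symm ?_)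
  simp only [Pi.div_apply, Pi.mul_apply, Pi.add_apply, Pi.sub_apply, Pi.neg_apply, id, Function.comp_apply]
  generalize Real.sqrt (1-e₁^2*t^2) = P at hPs hP2 ⊢
  generalize Real.sqrt (1-e₂^2*t^2) = Q at hQs hQ2 ⊢
  field_simp
  linear_combination (t^2*e₂^2 + Q^2) * hP2 + (1 - e₁^2*t^2) * hQ2

lemma lemA1 {m : ℝ} (h0 : 0 < m) (h1 : m < 1) :
    ∫ t in (0:ℝ)..1, (1 - m * t ^ 2)⁻¹
      = Real.arsinh (Real.sqrt m / Real.sqrt (1 - m)) / Real.sqrt m := by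
  have hsm : (0:ℝ) < Real.sqrt m := Real.sqrt_pos.2 h0
  have hm2 : Real.sqrt m ^ 2 = m := Real.sq_sqrt h0.le
  have key : ∀ t ∈ uIcc (0:ℝ) 1,
      HasDerivAt (fun t => Real.arsinh (Real.sqrt m * t / Real.sqrt (1 - m*t^2)) / Real.sqrt m)
        (1 - m * t ^ 2)⁻¹ t := by
    intro t ht
    rw [uIcc_of_le (by norm_num)] at ht
    obtain ⟨ht0, ht1⟩ := ht
    have ht2 : t^2 ≤ 1 := by nlinarith
    have hq : 0 < 1 - m * t^2 := by nlinarith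
    have hqs : 0 < Real.sqrt (1 - m*t^2) := Real.sqrt_pos.2 hq
    have hs2 : Real.sqrt (1 - m*t^2) ^ 2 = 1 - m*t^2 := Real.sq_sqrt hq.le
    have hd1 : HasDerivAt (fun x : ℝ => 1 - m * x^2) (-(m*(2*t))) t := by
      simpa using ((hasDerivAt_pow 2 t).const_mul m).const_sub 1
    have hd2 : HasDerivAt (fun t : ℝ => Real.sqrt (1 - m*t^2))
        (-(m*(2*t)) / (2*Real.sqrt (1-m*t^2))) t := hd1.sqrt hq.ne'
    have hd3 := ((hasDerivAt_id t).const_mul (Real.sqrt m)).div hd2 hqs.ne'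
    have hd4 := ((Real.hasDerivAt_arsinh _).comp t hd3).div_const (Real.sqrt m)
    have hg2 : Real.sqrt (1 + (Real.sqrt m * (id t) / Real.sqrt (1-m*t^2))^2)
        = (Real.sqrt (1-m*t^2))⁻¹ := by
      have h' : 1 + (Real.sqrt m * (id t) / Real.sqrt (1-m*t^2))^2 = ((1-m*t^2)⁻¹) := by
        field_simp
        simp only [id, hs2, hm2]
        ring
      rw [h', Real.sqrt_inv]
    refine hd4.congr_deriv (Eq.symm ?_)
    simp only [Pi.div_apply, Function.comp_apply]
    rw [hg2]
    generalize Real.sqrt (1-m*t^2) = S at hqs hs2 ⊢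
    generalize Real.sqrt m = M at hsm hm2 ⊢
    field_simp
    simp only [id]
    linear_combination (m*t^2) * hs2
  rw [integral_eq_sub_of_hasDerivAt key
    (((continuousOn_const.sub (continuousOn_const.mul (continuousOn_pow 2))).inv₀
      (fun t ht => by
        rw [uIcc_of_le (by norm_num)] at ht
        have ht2 : t^2 ≤ 1 := by nlinarith [ht.1, ht.2]
        show 1 - m * t^2 ≠ 0
        nlinarith [ht.1, ht.2])).intervalIntegrable)]
  norm_num [Real.arsinh_zero]

lemma lemA2 {m : ℝ} (h0 : 0 < m) (h1 : m < 1) :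
    ∫ θ in (0:ℝ)..(Real.pi/2), Real.sin θ * Real.sqrt (1 - m * Real.sin θ ^ 2)
      = 1/2 + (1-m)/(2*Real.sqrt m) * Real.arsinh (Real.sqrt m / Real.sqrt (1-m)) := by
  have hsm : (0:ℝ) < Real.sqrt m := Real.sqrt_pos.2 h0
  have hm2 : Real.sqrt m ^ 2 = m := Real.sq_sqrt h0.le
  have hc0 : (0:ℝ) < 1 - m := by linarith
  have hsc : (0:ℝ) < Real.sqrt (1-m) := Real.sqrt_pos.2 hc0
  have hc2 : Real.sqrt (1-m) ^ 2 = 1 - m := Real.sq_sqrt hc0.le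
  have key : ∀ θ ∈ uIcc (0:ℝ) (Real.pi/2),
      HasDerivAt (fun θ => -(Real.cos θ * Real.sqrt (1 - m * Real.sin θ^2) / 2)
          - (1-m)/(2*Real.sqrt m) * Real.arsinh (Real.cos θ * (Real.sqrt m/Real.sqrt (1-m))))
        (Real.sin θ * Real.sqrt (1 - m * Real.sin θ ^ 2)) θ := by
    intro θ _
    have hsin2 : Real.sin θ ^ 2 ≤ 1 := Real.sin_sq_le_one θ
    have hpyth := Real.sin_sq_add_cos_sq θ
    have hq : 0 < 1 - m * Real.sin θ^2 := by nlinarith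
    have hqs : 0 < Real.sqrt (1 - m * Real.sin θ^2) := Real.sqrt_pos.2 hq
    have hs2 : Real.sqrt (1 - m * Real.sin θ^2) ^ 2 = 1 - m * Real.sin θ^2 := Real.sq_sqrt hq.le
    have hd1 : HasDerivAt (fun θ : ℝ => 1 - m * Real.sin θ^2)
        (-(m * (2 * Real.sin θ * Real.cos θ))) θ := by
      have := (((Real.hasDerivAt_sin θ).pow 2).const_mul m).const_sub 1
      simpa [mul_comm, mul_assoc, mul_left_comm] using this
    have hd2 := hd1.sqrt hq.ne'
    have hd3 := ((Real.hasDerivAt_cos θ).mul hd2).div_const 2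
    have hd4 := (Real.hasDerivAt_cos θ).mul_const (Real.sqrt m/Real.sqrt (1-m))
    have hd5 := ((Real.hasDerivAt_arsinh _).comp θ hd4).const_mul ((1-m)/(2*Real.sqrt m))
    simp only [Function.comp_def] at hd5
    have hgg : Real.sqrt (1 + (Real.cos θ * (Real.sqrt m/Real.sqrt (1-m)))^2)
        = Real.sqrt (1 - m * Real.sin θ^2) / Real.sqrt (1-m) := by
      rw [show (1 + (Real.cos θ * (Real.sqrt m/Real.sqrt (1-m)))^2)
          = (1 - m * Real.sin θ^2)/(1-m) from by
        field_simp
        linear_combination (-m + m*Real.sin θ^2) * hc2 + (-m*Real.cos θ^2 + Real.cos θ^2) * hm2 + (m - m^2) * hpyth]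
      rw [Real.sqrt_div hq.le]
    have hdall := hd3.neg.sub hd5
    refine hdall.congr_deriv (Eq.symm ?_)
    rw [hgg]
    generalize Real.sqrt (1 - m*Real.sin θ^2) = S at hqs hs2 ⊢
    generalize Real.sqrt m = M at hsm hm2 ⊢
    generalize Real.sqrt (1-m) = C at hsc hc2 ⊢
    field_simp
    linear_combination Real.sin θ * hs2 - m*Real.sin θ * hpyth
  rw [integral_eq_sub_of_hasDerivAt key
    ((Real.continuous_sin.mul ((continuous_const.sub
      (continuous_const.mul (Real.continuous_sin.pow 2))).sqrt)).intervalIntegrable _ _)]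
  rw [Real.cos_pi_div_two, Real.sin_pi_div_two, Real.cos_zero, Real.sin_zero]
  norm_num [Real.arsinh_zero]
  ring

lemma lemB {A B : ℝ} (hA : 0 < A) (hB : 0 < B) :
    ∫ φ in (0:ℝ)..(Real.pi/2), (A * Real.cos φ^2 + B * Real.sin φ^2)⁻¹
      = Real.pi/(2*Real.sqrt (A*B)) := by
  obtain ⟨r, hrpos, hr2⟩ : ∃ r : ℝ, 0 < r ∧ r^2 * A = B := by
    refine ⟨Real.sqrt (B/A), Real.sqrt_pos.2 (div_pos hB hA), ?_⟩
    rw [Real.sq_sqrt (div_pos hB hA).le]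
    field_simp
  have hrA : Real.sqrt (A*B) = r * A := by
    rw [← hr2, show A*(r^2*A) = (r*A)^2 by ring]
    exact Real.sqrt_sq (by positivity)
  have hpos : ∀ x : ℝ, 0 < A * Real.cos x^2 + B * Real.sin x^2 := by
    intro x
    nlinarith [Real.sin_sq_add_cos_sq x, sq_nonneg (Real.sin x), sq_nonneg (Real.cos x),
      mul_pos hA hB, mul_nonneg (mul_nonneg hA.le (sq_nonneg (Real.cos x))) (sq_nonneg (Real.sin x)),
      mul_nonneg hA.le (sq_nonneg (Real.cos x)), mul_nonneg hB.le (sq_nonneg (Real.sin x))]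
  have key : ∀ φ ∈ uIcc (0:ℝ) (Real.pi/2),
      HasDerivAt (fun φ => (φ + Real.arctan ((r-1)*Real.sin φ*Real.cos φ
          /(Real.cos φ^2 + r*Real.sin φ^2)))/(r*A))
        ((A * Real.cos φ^2 + B * Real.sin φ^2)⁻¹) φ := by
    intro φ _
    have hpyth := Real.sin_sq_add_cos_sq φ
    have hq : 0 < Real.cos φ^2 + r*Real.sin φ^2 := by
      rcases le_or_gt r 1 with h | h
      · nlinarith [mul_nonneg (sub_nonneg.2 h) (sq_nonneg (Real.cos φ)), sq_nonneg (Real.sin φ)]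
      · nlinarith [mul_nonneg (sub_nonneg.2 h.le) (sq_nonneg (Real.sin φ)), sq_nonneg (Real.cos φ)]
    have hq2 : 0 < Real.cos φ^2 + r^2*Real.sin φ^2 := by
      rcases le_or_gt (r^2) 1 with h | h
      · nlinarith [mul_nonneg (sub_nonneg.2 h) (sq_nonneg (Real.cos φ)), sq_nonneg (Real.sin φ),
          mul_pos hrpos hrpos]
      · nlinarith [mul_nonneg (sub_nonneg.2 h.le) (sq_nonneg (Real.sin φ)), sq_nonneg (Real.cos φ)]
    have hAB := hpos φ
    have hdp : HasDerivAt (fun φ : ℝ => (r-1)*Real.sin φ*Real.cos φ)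
        ((r-1)*(Real.cos φ*Real.cos φ + Real.sin φ * -Real.sin φ)) φ := by
      have := ((Real.hasDerivAt_sin φ).mul (Real.hasDerivAt_cos φ)).const_mul (r-1)
      simpa [mul_assoc] using this
    have hdq : HasDerivAt (fun φ : ℝ => Real.cos φ^2 + r*Real.sin φ^2)
        (2*Real.cos φ^1 * -Real.sin φ + r*(2*Real.sin φ^1*Real.cos φ)) φ := by
      have := ((Real.hasDerivAt_cos φ).pow 2).add (((Real.hasDerivAt_sin φ).pow 2).const_mul r)
      refine this.congr_deriv ?_
      simp [mul_assoc, mul_comm, mul_left_comm]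
    have hdiv := hdp.div hdq hq.ne'
    have harc := (Real.hasDerivAt_arctan _).comp φ hdiv
    have hall := ((hasDerivAt_id φ).add harc).div_const (r*A)
    refine hall.congr_deriv (Eq.symm ?_)
    simp only [Pi.div_apply, Pi.mul_apply, Pi.add_apply, Pi.sub_apply, Pi.neg_apply, id, Function.comp_apply]
    rw [show (1 + ((r-1)*Real.sin φ*Real.cos φ/(Real.cos φ^2 + r*Real.sin φ^2))^2)
        = (Real.cos φ^2 + r^2*Real.sin φ^2)/(Real.cos φ^2 + r*Real.sin φ^2)^2 from by
      field_simp
      linear_combination (Real.cos φ^2 + r^2*Real.sin φ^2) * hpyth]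
    have hq' : Real.cos φ ^ 2 + Real.sin φ ^ 2 * r ≠ 0 := by linarith
    have hq2' : Real.cos φ ^ 2 + Real.sin φ ^ 2 * r ^ 2 ≠ 0 := by linarith
    field_simp
    linear_combination (Real.sin φ^2*(r + (Real.sin φ^2 + Real.cos φ^2 - 1)
        *(r + (r-1)*(Real.cos φ^2 - r*Real.sin φ^2)))) * hr2
      - (A*(Real.cos φ^2 + r^2*Real.sin φ^2)*(r + (r-1)*(Real.cos φ^2 - r*Real.sin φ^2))) * hpyth
  rw [integral_eq_sub_of_hasDerivAt key
    (((continuous_const.mul (Real.continuous_cos.pow 2)).add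
      (continuous_const.mul (Real.continuous_sin.pow 2))).continuousOn.inv₀
        (fun x _ => (hpos x).ne')).intervalIntegrable]
  rw [Real.cos_pi_div_two, Real.sin_pi_div_two, Real.cos_zero, Real.sin_zero, hrA]
  norm_num [Real.arctan_zero]
  ring

lemma lemInner {m : ℝ} (h0 : 0 < m) (h1 : m < 1) :
    ∫ θ in (0:ℝ)..(Real.pi/2), Real.sin θ * Real.sqrt (1 - m * Real.sin θ ^ 2)
      = 1/2 + (1-m)/2 * ∫ t in (0:ℝ)..1, (1 - m * t ^ 2)⁻¹ := by
  rw [lemA2 h0 h1, lemA1 h0 h1]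
  ring

lemma lemD {e₁ e₂ t : ℝ} (h0 : 0 < e₂) (h21 : e₂ < e₁) (h11 : e₁ < 1)
    (ht0 : 0 < t) (ht1 : t ≤ 1) :
    ∫ φ' in (0:ℝ)..(Real.pi/2),
        (1 - (e₁^2*Real.cos φ'^2 + e₂^2*Real.sin φ'^2))/2
          * (1 - (e₁^2*Real.cos φ'^2 + e₂^2*Real.sin φ'^2) * t^2)⁻¹
      = Real.pi/(4*t^2) - (1-t^2) * Real.pi
          /(4*t^2*(Real.sqrt (1-e₁^2*t^2) * Real.sqrt (1-e₂^2*t^2))) := by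
  have he1 : 0 < e₁ := h0.trans h21
  have ht2 : t^2 ≤ 1 := by nlinarith
  have he12 : e₁^2 < 1 := by nlinarith
  have hA : 0 < 1 - e₁^2*t^2 := by nlinarith [mul_le_mul_of_nonneg_left ht2 (sq_nonneg e₁)]
  have hB : 0 < 1 - e₂^2*t^2 := by nlinarith [mul_le_mul_of_nonneg_left ht2 (sq_nonneg e₂)]
  have hAs := Real.sqrt_pos.2 hA
  have hBs := Real.sqrt_pos.2 hB
  have key : EqOn (fun φ' => (1 - (e₁^2*Real.cos φ'^2 + e₂^2*Real.sin φ'^2))/2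
          * (1 - (e₁^2*Real.cos φ'^2 + e₂^2*Real.sin φ'^2) * t^2)⁻¹)
      (fun φ' => 1/(2*t^2) - (1-t^2)/(2*t^2)
          * ((1-e₁^2*t^2) * Real.cos φ'^2 + (1-e₂^2*t^2) * Real.sin φ'^2)⁻¹)
      (uIcc (0:ℝ) (Real.pi/2)) := by
    intro φ' _
    have hpyth := Real.sin_sq_add_cos_sq φ'
    have hden : (1-e₁^2*t^2) * Real.cos φ'^2 + (1-e₂^2*t^2) * Real.sin φ'^2
        = 1 - (e₁^2*Real.cos φ'^2 + e₂^2*Real.sin φ'^2) * t^2 := by linear_combination hpyth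
    have hden0 : 0 < 1 - (e₁^2*Real.cos φ'^2 + e₂^2*Real.sin φ'^2) * t^2 := by
      rw [← hden]
      rcases le_or_gt (1-e₁^2*t^2) (1-e₂^2*t^2) with h | h
      · nlinarith [mul_le_mul_of_nonneg_right h (sq_nonneg (Real.sin φ')), sq_nonneg (Real.cos φ')]
      · nlinarith [mul_le_mul_of_nonneg_right h.le (sq_nonneg (Real.cos φ')), sq_nonneg (Real.sin φ')]
    simp only
    rw [hden]
    field_simp
    ring
  rw [integral_congr key]
  have hintB : IntervalIntegrable
      (fun φ' => ((1-e₁^2*t^2) * Real.cos φ'^2 + (1-e₂^2*t^2) * Real.sin φ'^2)⁻¹)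
      volume 0 (Real.pi/2) := by
    refine (ContinuousOn.inv₀ (by fun_prop) ?_).intervalIntegrable
    intro x _
    rcases le_or_gt (1-e₁^2*t^2) (1-e₂^2*t^2) with h | h
    · nlinarith [mul_le_mul_of_nonneg_right h (sq_nonneg (Real.sin x)), sq_nonneg (Real.cos x),
        Real.sin_sq_add_cos_sq x]
    · nlinarith [mul_le_mul_of_nonneg_right h.le (sq_nonneg (Real.cos x)), sq_nonneg (Real.sin x),
        Real.sin_sq_add_cos_sq x]
  rw [intervalIntegral.integral_sub (intervalIntegrable_const) (hintB.const_mul _),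
    intervalIntegral.integral_const_mul, lemB hA hB, intervalIntegral.integral_const,
    Real.sqrt_mul hA.le]
  have hπ := Real.pi_pos
  generalize Real.sqrt (1-e₁^2*t^2) = P at hAs ⊢
  generalize Real.sqrt (1-e₂^2*t^2) = Q at hBs ⊢
  simp only [smul_eq_mul, sub_zero]
  field_simp
  ring

lemma lemE {e₁ e₂ : ℝ} (h0 : 0 < e₂) (h21 : e₂ < e₁) (h11 : e₁ < 1) :
    Tendsto (fun t => Real.pi/4 * ((Real.sqrt (1-e₁^2*t^2) * Real.sqrt (1-e₂^2*t^2) - 1)/t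
        + e₁ * ellipticE (Real.arcsin (e₁*t)) (e₂/e₁)
        + (1-e₁^2)/e₁ * ellipticF (Real.arcsin (e₁*t)) (e₂/e₁)))
      (nhdsWithin 0 (Ioi 0)) (nhds 0) := by
  have he1 : 0 < e₁ := h0.trans h21
  have hk2 : (e₂/e₁)^2 < 1 := by
    rw [div_pow, div_lt_one (by positivity)]
    nlinarith
  have T1 : Tendsto (fun t : ℝ => (Real.sqrt (1-e₁^2*t^2) * Real.sqrt (1-e₂^2*t^2) - 1)/t)
      (nhdsWithin 0 (Ioi 0)) (nhds 0) := by
    have hgc : Continuous (fun t : ℝ => t*(e₁^2*e₂^2*t^2 - e₁^2 - e₂^2)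
        /(Real.sqrt (1-e₁^2*t^2) * Real.sqrt (1-e₂^2*t^2) + 1)) := by
      apply Continuous.div (by fun_prop) (by fun_prop)
      intro x
      positivity
    have h0' : (fun t : ℝ => t*(e₁^2*e₂^2*t^2 - e₁^2 - e₂^2)
        /(Real.sqrt (1-e₁^2*t^2) * Real.sqrt (1-e₂^2*t^2) + 1)) 0 = 0 := by simp
    have := (hgc.tendsto 0).mono_left (nhdsWithin_le_nhds (s := Ioi (0:ℝ)))
    norm_num at this
    refine this.congr' ?_
    filter_upwards [Ioo_mem_nhdsGT_of_mem (by norm_num : (0:ℝ) ∈ Ico (0:ℝ) 1)] with t ht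
    obtain ⟨ht0, ht1⟩ := ht
    have ht2 : t^2 ≤ 1 := by nlinarith
    have hA : 0 < 1 - e₁^2*t^2 := by nlinarith [mul_le_mul_of_nonneg_left ht2 (sq_nonneg e₁)]
    have hB : 0 < 1 - e₂^2*t^2 := by nlinarith [mul_le_mul_of_nonneg_left ht2 (sq_nonneg e₂)]
    have hAs := Real.sqrt_pos.2 hA
    have hBs := Real.sqrt_pos.2 hB
    have hA2 := Real.sq_sqrt hA.le
    have hB2 := Real.sq_sqrt hB.le
    have hPQ1 : 0 < Real.sqrt (1-e₁^2*t^2) * Real.sqrt (1-e₂^2*t^2) + 1 := by positivity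
    field_simp
    rw [show (1:ℝ) - t^2*e₁^2 = 1 - e₁^2*t^2 by ring, show (1:ℝ) - t^2*e₂^2 = 1 - e₂^2*t^2 by ring]
    linear_combination (Real.sqrt (1-e₂^2*t^2)^2 - e₂^2*t^2) * hA2 + hB2
      + (t^2*e₂^2 - 2*(1-e₂^2*t^2)) * hA2
      + (-(t^2*e₁^2) - 2*Real.sqrt (1-e₁^2*t^2)^2) * hB2
  have TE : Tendsto (fun t : ℝ => ellipticE (Real.arcsin (e₁*t)) (e₂/e₁))
      (nhdsWithin 0 (Ioi 0)) (nhds 0) := by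
    have hc : ContinuousAt (fun t : ℝ => ellipticE (Real.arcsin (e₁*t)) (e₂/e₁)) 0 :=
      (hasDerivAt_ellipticE _).continuousAt.comp
        ((Real.continuous_arcsin.continuousAt).comp (by fun_prop))
    have h0' : ellipticE (Real.arcsin (e₁*0)) (e₂/e₁) = 0 := by
      simp [ellipticE]
    have := hc.tendsto.mono_left (nhdsWithin_le_nhds (s := Ioi (0:ℝ)))
    rwa [h0'] at this
  have TF : Tendsto (fun t : ℝ => ellipticF (Real.arcsin (e₁*t)) (e₂/e₁))
      (nhdsWithin 0 (Ioi 0)) (nhds 0) := by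
    have hc : ContinuousAt (fun t : ℝ => ellipticF (Real.arcsin (e₁*t)) (e₂/e₁)) 0 :=
      (hasDerivAt_ellipticF hk2 _).continuousAt.comp
        ((Real.continuous_arcsin.continuousAt).comp (by fun_prop))
    have h0' : ellipticF (Real.arcsin (e₁*0)) (e₂/e₁) = 0 := by
      simp [ellipticF]
    have := hc.tendsto.mono_left (nhdsWithin_le_nhds (s := Ioi (0:ℝ)))
    rwa [h0'] at this
  have := ((T1.add (TE.const_mul e₁)).add (TF.const_mul ((1-e₁^2)/e₁))).const_mul (Real.pi/4)
  simpa using this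

theorem stmt_15 (e₁ e₂ : ℝ) (h0 : 0 < e₂) (h21 : e₂ < e₁) (h11 : e₁ < 1)
    (φ k : ℝ) (hφ : φ = Real.arcsin e₁) (hk : k = e₂ / e₁) :
    (∫ φ' in (0:ℝ)..(Real.pi / 2), ∫ θ in (0:ℝ)..(Real.pi / 2),
        Real.sin θ *
          Real.sqrt (1 - (e₁ ^ 2 * Real.cos φ' ^ 2 + e₂ ^ 2 * Real.sin φ' ^ 2)
            * Real.sin θ ^ 2))
      = Real.pi / 4 *
          (Real.sqrt ((1 - e₁ ^ 2) * (1 - e₂ ^ 2))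
            + e₁ * ellipticE φ k
            + (1 - e₁ ^ 2) / e₁ * ellipticF φ k) := by
  subst hφ hk
  have he1 : 0 < e₁ := h0.trans h21
  have hπ2 : (0:ℝ) ≤ Real.pi/2 := by positivity
  have hm : ∀ φ' : ℝ, 0 < e₁^2*Real.cos φ'^2 + e₂^2*Real.sin φ'^2
      ∧ e₁^2*Real.cos φ'^2 + e₂^2*Real.sin φ'^2 < 1 := by
    intro φ'
    have hpyth := Real.sin_sq_add_cos_sq φ'
    have hab : (0:ℝ) ≤ e₁^2 - e₂^2 := by nlinarith
    constructor
    · nlinarith [mul_nonneg hab (sq_nonneg (Real.cos φ'))]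
    · nlinarith [mul_nonneg hab (sq_nonneg (Real.sin φ'))]
  -- step 1 : rewrite the inner integral
  rw [integral_congr (g := fun φ' => 1/2 + (1 - (e₁^2*Real.cos φ'^2 + e₂^2*Real.sin φ'^2))/2
      * ∫ t in (0:ℝ)..1, (1 - (e₁^2*Real.cos φ'^2 + e₂^2*Real.sin φ'^2) * t^2)⁻¹)
    (fun φ' _ => lemInner (hm φ').1 (hm φ').2)]
  -- pull the constant inside the t-integral
  have hpull : ∀ φ' : ℝ, (1 - (e₁^2*Real.cos φ'^2 + e₂^2*Real.sin φ'^2))/2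
      * ∫ t in (0:ℝ)..1, (1 - (e₁^2*Real.cos φ'^2 + e₂^2*Real.sin φ'^2) * t^2)⁻¹
      = ∫ t in (0:ℝ)..1, (1 - (e₁^2*Real.cos φ'^2 + e₂^2*Real.sin φ'^2))/2
          * (1 - (e₁^2*Real.cos φ'^2 + e₂^2*Real.sin φ'^2) * t^2)⁻¹ :=
    fun φ' => (intervalIntegral.integral_const_mul _ _).symm
  simp_rw [hpull]
  -- product integrability
  have hcontProd : ContinuousOn
      (Function.uncurry (fun φ' t => (1 - (e₁^2*Real.cos φ'^2 + e₂^2*Real.sin φ'^2))/2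
        * (1 - (e₁^2*Real.cos φ'^2 + e₂^2*Real.sin φ'^2) * t^2)⁻¹))
      ((Icc (0:ℝ) (Real.pi/2)) ×ˢ (Icc (0:ℝ) 1)) := by
    apply ContinuousOn.mul (Continuous.continuousOn (by fun_prop))
    apply ContinuousOn.inv₀ (Continuous.continuousOn (by fun_prop))
    rintro ⟨x, t⟩ ⟨-, ht⟩
    have h1 := (hm x).1
    have h2 := (hm x).2
    have ht2 : t^2 ≤ 1 := by nlinarith [ht.1, ht.2]
    have := mul_le_mul_of_nonneg_left ht2 h1.le
    nlinarith
  have hS' : Integrable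
      (Function.uncurry (fun φ' t => (1 - (e₁^2*Real.cos φ'^2 + e₂^2*Real.sin φ'^2))/2
        * (1 - (e₁^2*Real.cos φ'^2 + e₂^2*Real.sin φ'^2) * t^2)⁻¹))
      ((volume.restrict (Ioc (0:ℝ) (Real.pi/2))).prod (volume.restrict (Ioc (0:ℝ) 1))) := by
    rw [Measure.prod_restrict]
    exact (hcontProd.integrableOn_compact (isCompact_Icc.prod isCompact_Icc)).mono_set
      (prod_mono Ioc_subset_Icc_self Ioc_subset_Icc_self)
  have hIntφ : IntervalIntegrable
      (fun φ' => ∫ t in (0:ℝ)..1, (1 - (e₁^2*Real.cos φ'^2 + e₂^2*Real.sin φ'^2))/2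
        * (1 - (e₁^2*Real.cos φ'^2 + e₂^2*Real.sin φ'^2) * t^2)⁻¹) volume 0 (Real.pi/2) := by
    rw [intervalIntegrable_iff, uIoc_of_le hπ2]
    exact hS'.integral_prod_left.congr (ae_of_all _
      (fun φ' => (intervalIntegral.integral_of_le zero_le_one).symm))
  have hIntt : IntervalIntegrable
      (fun t => ∫ φ' in (0:ℝ)..(Real.pi/2), (1 - (e₁^2*Real.cos φ'^2 + e₂^2*Real.sin φ'^2))/2
        * (1 - (e₁^2*Real.cos φ'^2 + e₂^2*Real.sin φ'^2) * t^2)⁻¹) volume 0 1 := by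
    rw [intervalIntegrable_iff, uIoc_of_le zero_le_one]
    exact hS'.integral_prod_right.congr (ae_of_all _
      (fun t => (intervalIntegral.integral_of_le hπ2).symm))
  rw [intervalIntegral.integral_add intervalIntegrable_const hIntφ,
    intervalIntegral.integral_const]
  -- Fubini
  have hswap : (∫ φ' in (0:ℝ)..(Real.pi/2), ∫ t in (0:ℝ)..1,
        (1 - (e₁^2*Real.cos φ'^2 + e₂^2*Real.sin φ'^2))/2
          * (1 - (e₁^2*Real.cos φ'^2 + e₂^2*Real.sin φ'^2) * t^2)⁻¹)
      = ∫ t in (0:ℝ)..1, ∫ φ' in (0:ℝ)..(Real.pi/2),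
        (1 - (e₁^2*Real.cos φ'^2 + e₂^2*Real.sin φ'^2))/2
          * (1 - (e₁^2*Real.cos φ'^2 + e₂^2*Real.sin φ'^2) * t^2)⁻¹ := by
    rw [intervalIntegral.integral_of_le hπ2, intervalIntegral.integral_of_le zero_le_one]
    simp_rw [intervalIntegral.integral_of_le zero_le_one,
      intervalIntegral.integral_of_le hπ2]
    exact MeasureTheory.integral_integral_swap hS'
  rw [hswap]
  -- FTC on (0,1)
  have hmain := intervalIntegral.integral_eq_sub_of_hasDerivAt_of_tendsto
    (f := fun t => Real.pi/4 * ((Real.sqrt (1-e₁^2*t^2) * Real.sqrt (1-e₂^2*t^2) - 1)/t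
        + e₁ * ellipticE (Real.arcsin (e₁*t)) (e₂/e₁)
        + (1-e₁^2)/e₁ * ellipticF (Real.arcsin (e₁*t)) (e₂/e₁)))
    (f' := fun t => ∫ φ' in (0:ℝ)..(Real.pi/2),
        (1 - (e₁^2*Real.cos φ'^2 + e₂^2*Real.sin φ'^2))/2
          * (1 - (e₁^2*Real.cos φ'^2 + e₂^2*Real.sin φ'^2) * t^2)⁻¹)
    zero_lt_one
    (fun x hx => by
      have h := lemC h0 h21 h11 hx.1 hx.2.le
      rwa [← lemD h0 h21 h11 hx.1 hx.2.le] at h)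
    hIntt (lemE h0 h21 h11)
    (((lemC h0 h21 h11 one_pos le_rfl).continuousAt.tendsto).mono_left nhdsWithin_le_nhds)
  rw [hmain]
  rw [Real.sqrt_mul (by nlinarith : (0:ℝ) ≤ 1-e₁^2)]
  norm_num
  ring
end

section
/- Let f₁ and f₂ be real numbers with 0 < f₂ < f₁, and set φ̄ = arctan f₁ and k̄ = √(1 − f₂²/f₁²). Then the iterated integral ∫_0^{π/2} ∫_0^{π/2} sin θ · √( 1 + (f₁² cos²φ' + f₂² sin²φ') sin²θ ) dθ dφ' equals (π/4) · [ √((1 + f₂²)/(1 + f₁²)) + F(φ̄, k̄)/f₁ + f₁ · E(φ̄, k̄) ]. (This is the surface area formula for an ellipsoid with semi-axes c > b > a > 0 and f₁² = (c² − a²)/a², f₂² = (c² − b²)/b², stated as an identity between a double integral and elliptic integrals.) -/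
open Real intervalIntegral

/- ============ auxiliary lemmas ============ -/

lemma aux_lem_b (m : ℝ) (hm : 0 < m) :
    ∫ t in (0:ℝ)..1, 1 / (1 + m * t ^ 2) = Real.arctan (Real.sqrt m) / Real.sqrt m := by
  have hsm : 0 < Real.sqrt m := Real.sqrt_pos.mpr hm
  have hsq : Real.sqrt m ^ 2 = m := Real.sq_sqrt hm.le
  have key : ∀ t : ℝ, HasDerivAt (fun t => Real.arctan (Real.sqrt m * t) / Real.sqrt m)
      (1 / (1 + m * t ^ 2)) t := by
    intro t
    have h1 : HasDerivAt (fun t : ℝ => Real.sqrt m * t) (Real.sqrt m) t := by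
      simpa using (hasDerivAt_id t).const_mul (Real.sqrt m)
    have h3 := h1.arctan.div_const (Real.sqrt m)
    refine h3.congr_deriv (Eq.symm ?_)
    rw [mul_pow, hsq]
    field_simp
  have hcont : Continuous fun t : ℝ => 1 / (1 + m * t ^ 2) := by
    apply continuous_const.div
    · fun_prop
    · intro t; positivity
  rw [intervalIntegral.integral_eq_sub_of_hasDerivAt (fun t _ => key t)
    (hcont.intervalIntegrable 0 1)]
  simp

lemma aux_quad_trig_pos (A B : ℝ) (hA : 0 < A) (hB : 0 < B) (φ : ℝ) :
    0 < A * Real.cos φ ^ 2 + B * Real.sin φ ^ 2 := by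
  have h := Real.sin_sq_add_cos_sq φ
  rcases le_total A B with hAB | hAB
  · nlinarith [mul_nonneg (sub_nonneg.mpr hAB) (sq_nonneg (Real.sin φ))]
  · nlinarith [mul_nonneg (sub_nonneg.mpr hAB) (sq_nonneg (Real.cos φ))]

lemma aux_lem_K (A B : ℝ) (hA : 0 < A) (hB : 0 < B) :
    ∫ φ in (0:ℝ)..(Real.pi/2), 1 / (A * Real.cos φ ^ 2 + B * Real.sin φ ^ 2)
      = Real.pi / (2 * Real.sqrt (A * B)) := by
  set α := Real.sqrt A with hα
  set β := Real.sqrt B with hβ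
  have hα0 : 0 < α := Real.sqrt_pos.mpr hA
  have hβ0 : 0 < β := Real.sqrt_pos.mpr hB
  have hα2 : α ^ 2 = A := Real.sq_sqrt hA.le
  have hβ2 : β ^ 2 = B := Real.sq_sqrt hB.le
  set G : ℝ → ℝ := fun φ => (φ + Real.arctan ((β - α) * Real.sin φ * Real.cos φ /
      (α * Real.cos φ ^ 2 + β * Real.sin φ ^ 2))) / (α * β) with hG
  have key : ∀ φ : ℝ, HasDerivAt G (1 / (A * Real.cos φ ^ 2 + B * Real.sin φ ^ 2)) φ := by
    intro φ
    have hpyth : Real.sin φ ^ 2 + Real.cos φ ^ 2 = 1 := Real.sin_sq_add_cos_sq φ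
    have hdpos := aux_quad_trig_pos α β hα0 hβ0 φ
    have hdne : α * Real.cos φ ^ 2 + β * Real.sin φ ^ 2 ≠ 0 := hdpos.ne'
    have hKpos : 0 < α ^ 2 * Real.cos φ ^ 2 + β ^ 2 * Real.sin φ ^ 2 :=
      aux_quad_trig_pos _ _ (by positivity) (by positivity) φ
    have hKne := hKpos.ne'
    have hn : HasDerivAt (fun φ => (β - α) * Real.sin φ * Real.cos φ)
        ((β - α) * Real.cos φ * Real.cos φ + (β - α) * Real.sin φ * (-Real.sin φ)) φ :=
      (((hasDerivAt_sin φ).const_mul (β - α)).mul (hasDerivAt_cos φ))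
    have hd : HasDerivAt (fun φ => α * Real.cos φ ^ 2 + β * Real.sin φ ^ 2)
        (α * (2 * Real.cos φ ^ 1 * -Real.sin φ) + β * (2 * Real.sin φ ^ 1 * Real.cos φ)) φ := by
      exact (((hasDerivAt_cos φ).pow 2).const_mul α).add
        (((hasDerivAt_sin φ).pow 2).const_mul β)
    have hu := (hn.div hd hdne).arctan
    have hfinal := ((hasDerivAt_id φ).add hu).div_const (α * β)
    refine hfinal.congr_deriv (Eq.symm ?_)
    simp only [Pi.div_apply]
    have e1 : (1 : ℝ) + ((β - α) * Real.sin φ * Real.cos φ /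
        (α * Real.cos φ ^ 2 + β * Real.sin φ ^ 2)) ^ 2
        = (α ^ 2 * Real.cos φ ^ 2 + β ^ 2 * Real.sin φ ^ 2) /
          (α * Real.cos φ ^ 2 + β * Real.sin φ ^ 2) ^ 2 := by
      field_simp
      linear_combination (β ^ 2 * Real.sin φ ^ 2 + α ^ 2 * Real.cos φ ^ 2) * hpyth
    have e2 : ((β - α) * Real.cos φ * Real.cos φ + (β - α) * Real.sin φ * -Real.sin φ) *
          (α * Real.cos φ ^ 2 + β * Real.sin φ ^ 2) -
        (β - α) * Real.sin φ * Real.cos φ *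
          (α * (2 * Real.cos φ ^ 1 * -Real.sin φ) + β * (2 * Real.sin φ ^ 1 * Real.cos φ))
        = (β - α) * (α * Real.cos φ ^ 2 - β * Real.sin φ ^ 2) := by
      linear_combination ((β - α) * (α * Real.cos φ ^ 2 - β * Real.sin φ ^ 2)) * hpyth
    rw [e1, e2, ← hα2, ← hβ2]
    have hd2 : (α * Real.cos φ ^ 2 + β * Real.sin φ ^ 2) ^ 2 ≠ 0 := pow_ne_zero 2 hdne
    field_simp
    ring_nf
    linear_combination (-α*β) * hpyth
  have hcont : Continuous fun φ : ℝ => 1 / (A * Real.cos φ ^ 2 + B * Real.sin φ ^ 2) := by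
    apply continuous_const.div
    · fun_prop
    · intro φ; exact (aux_quad_trig_pos A B hA hB φ).ne'
  rw [intervalIntegral.integral_eq_sub_of_hasDerivAt (fun φ _ => key φ)
    (hcont.intervalIntegrable 0 (Real.pi/2))]
  have : Real.sqrt (A * B) = α * β := Real.sqrt_mul hA.le B
  rw [this]
  simp [hG, Real.cos_pi_div_two, Real.sin_pi_div_two]
  ring

lemma aux_lem_inner (m : ℝ) (hm : 0 < m) :
    ∫ θ in (0:ℝ)..(Real.pi/2), Real.sin θ * Real.sqrt (1 + m * Real.sin θ ^ 2)
      = 1/2 + (1 + m) / (2 * Real.sqrt m) * Real.arctan (Real.sqrt m) := by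
  set μ := Real.sqrt m with hμ
  have hμ0 : 0 < μ := Real.sqrt_pos.mpr hm
  have hμ2 : μ ^ 2 = m := Real.sq_sqrt hm.le
  set A : ℝ → ℝ := fun θ => -(Real.cos θ * Real.sqrt (1 + m * Real.sin θ ^ 2)) / 2
      - (1 + m) / (2 * μ) * Real.arctan (μ * Real.cos θ / Real.sqrt (1 + m * Real.sin θ ^ 2))
    with hA
  have key : ∀ θ : ℝ, HasDerivAt A (Real.sin θ * Real.sqrt (1 + m * Real.sin θ ^ 2)) θ := by
    intro θ
    have hpyth : Real.sin θ ^ 2 + Real.cos θ ^ 2 = 1 := Real.sin_sq_add_cos_sq θ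
    have hwpos : 0 < 1 + m * Real.sin θ ^ 2 := by positivity
    have hw : HasDerivAt (fun θ => 1 + m * Real.sin θ ^ 2)
        (m * (2 * Real.sin θ ^ 1 * Real.cos θ)) θ :=
      (((hasDerivAt_sin θ).pow 2).const_mul m).const_add 1
    have hS := hw.sqrt hwpos.ne'
    have hSpos : 0 < Real.sqrt (1 + m * Real.sin θ ^ 2) := Real.sqrt_pos.mpr hwpos
    have hS2 : Real.sqrt (1 + m * Real.sin θ ^ 2) ^ 2 = 1 + m * Real.sin θ ^ 2 :=
      Real.sq_sqrt hwpos.le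
    have h1 := (((hasDerivAt_cos θ).mul hS).neg).div_const 2
    have hu := (((hasDerivAt_cos θ).const_mul μ).div hS hSpos.ne').arctan
    have hA' := h1.sub (hu.const_mul ((1 + m) / (2 * μ)))
    refine hA'.congr_deriv (Eq.symm ?_)
    simp only [Pi.div_apply]
    have hm1 : (0:ℝ) < 1 + m := by linarith
    have e1 : 1 + (μ * Real.cos θ / Real.sqrt (1 + m * Real.sin θ ^ 2)) ^ 2
        = (1 + m) / Real.sqrt (1 + m * Real.sin θ ^ 2) ^ 2 := by
      rw [hS2]
      field_simp
      linear_combination (m*Real.sin θ^2 - m) * hS2 + m*Real.sin θ^2*Real.cos θ^2 * hμ2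
        + m^2*Real.sin θ^2 * hpyth + Real.cos θ^2 * hμ2 + m * hpyth
    have e2 : μ * -Real.sin θ * Real.sqrt (1 + m * Real.sin θ ^ 2) -
          μ * Real.cos θ * (m * (2 * Real.sin θ ^ 1 * Real.cos θ) / (2 * Real.sqrt (1 + m * Real.sin θ ^ 2)))
        = -μ * Real.sin θ * (1 + m) / Real.sqrt (1 + m * Real.sin θ ^ 2) := by
      generalize hSg : Real.sqrt (1 + m * Real.sin θ ^ 2) = S at hS2 hSpos ⊢
      field_simp
      linear_combination (-Real.sin θ) * hS2 + (-m*Real.sin θ) * hpyth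
    rw [e1, e2]
    have e3 : 1 / ((1 + m) / Real.sqrt (1 + m * Real.sin θ ^ 2) ^ 2) *
          (-μ * Real.sin θ * (1 + m) / Real.sqrt (1 + m * Real.sin θ ^ 2) /
            Real.sqrt (1 + m * Real.sin θ ^ 2) ^ 2)
        = -(μ * Real.sin θ) / Real.sqrt (1 + m * Real.sin θ ^ 2) := by
      have hm2 : (1:ℝ) + m ≠ 0 := by positivity
      field_simp
    rw [e3]
    generalize hSg : Real.sqrt (1 + m * Real.sin θ ^ 2) = S at hS2 hSpos ⊢
    field_simp
    linear_combination Real.sin θ * hS2 + (m*Real.sin θ) * hpyth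
  have hcont : Continuous fun θ : ℝ => Real.sin θ * Real.sqrt (1 + m * Real.sin θ ^ 2) := by
    fun_prop
  rw [intervalIntegral.integral_eq_sub_of_hasDerivAt (fun θ _ => key θ)
    (hcont.intervalIntegrable 0 (Real.pi/2))]
  simp [hA, Real.cos_pi_div_two, Real.sin_pi_div_two]
  ring

section
variable (f₁ f₂ : ℝ)

lemma aux_kb_sq (h0 : 0 < f₂) (h21 : f₂ < f₁) :
    (Real.sqrt (1 - f₂ ^ 2 / f₁ ^ 2)) ^ 2 = 1 - f₂ ^ 2 / f₁ ^ 2 := by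
  have hf1 : 0 < f₁ := h0.trans h21
  apply Real.sq_sqrt
  rw [sub_nonneg, div_le_one (by positivity)]
  nlinarith

lemma aux_base_pos (h0 : 0 < f₂) (h21 : f₂ < f₁) (θ : ℝ) :
    0 < 1 - (Real.sqrt (1 - f₂ ^ 2 / f₁ ^ 2)) ^ 2 * Real.sin θ ^ 2 := by
  have hf1 : 0 < f₁ := h0.trans h21
  rw [aux_kb_sq f₁ f₂ h0 h21]
  have h1 : Real.sin θ ^ 2 ≤ 1 := Real.sin_sq_le_one θ
  have h2 : 0 < f₂ ^ 2 / f₁ ^ 2 := by positivity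
  have h3 : f₂ ^ 2 / f₁ ^ 2 ≤ 1 := by rw [div_le_one (by positivity)]; nlinarith
  nlinarith [sq_nonneg (Real.sin θ)]

lemma aux_subst_core (h0 : 0 < f₂) (h21 : f₂ < f₁) (p : ℝ) (g : ℝ → ℝ)
    (hg : g = fun θ => (1 - (Real.sqrt (1 - f₂ ^ 2 / f₁ ^ 2)) ^ 2 * Real.sin θ ^ 2) ^ p) :
    ∫ t in (0:ℝ)..1, (f₁ / (1 + f₁ ^ 2 * t ^ 2)) *
        (((1 + f₂ ^ 2 * t ^ 2) / (1 + f₁ ^ 2 * t ^ 2)) ^ p)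
      = ∫ θ in (0:ℝ)..(Real.arctan f₁), g θ := by
  have hf1 : 0 < f₁ := h0.trans h21
  have hderiv : ∀ t : ℝ, HasDerivAt (fun t => Real.arctan (f₁ * t))
      (f₁ / (1 + f₁ ^ 2 * t ^ 2)) t := by
    intro t
    have h1 : HasDerivAt (fun t : ℝ => f₁ * t) f₁ t := by
      simpa using (hasDerivAt_id t).const_mul f₁
    have := h1.arctan
    convert this using 1
    rw [mul_pow]
    ring
  have hgc : Continuous g := by
    rw [hg]
    apply Continuous.rpow_const
    · fun_prop
    · intro θ; exact Or.inl (aux_base_pos f₁ f₂ h0 h21 θ).ne'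
  have hcont' : ContinuousOn (fun t : ℝ => f₁ / (1 + f₁ ^ 2 * t ^ 2)) (Set.uIcc 0 1) := by
    apply ContinuousOn.div continuousOn_const (by fun_prop)
    intro t _; positivity
  have := intervalIntegral.integral_comp_smul_deriv (f := fun t => Real.arctan (f₁ * t))
    (f' := fun t => f₁ / (1 + f₁ ^ 2 * t ^ 2)) (g := g)
    (fun t _ => hderiv t) hcont' hgc
  simp only [mul_zero, Real.arctan_zero, mul_one] at this
  rw [← this]
  apply intervalIntegral.integral_congr
  intro t _
  simp only [smul_eq_mul, hg]
  congr 1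
  simp only [Function.comp_apply]
  congr 1
  rw [Real.sin_arctan, aux_kb_sq f₁ f₂ h0 h21]
  have h1 : (0:ℝ) < 1 + f₁ ^ 2 * t ^ 2 := by positivity
  rw [div_pow, Real.sq_sqrt (by positivity : (0:ℝ) ≤ 1 + (f₁*t)^2)]
  field_simp
  ring

lemma aux_lem_F (h0 : 0 < f₂) (h21 : f₂ < f₁) :
    ∫ t in (0:ℝ)..1, f₁ / Real.sqrt ((1 + f₁ ^ 2 * t ^ 2) * (1 + f₂ ^ 2 * t ^ 2))
      = ellipticF (Real.arctan f₁) (Real.sqrt (1 - f₂ ^ 2 / f₁ ^ 2)) := by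
  have hf1 : 0 < f₁ := h0.trans h21
  have h := aux_subst_core f₁ f₂ h0 h21 (-(1:ℝ)/2) _ rfl
  rw [ellipticF, ← h]
  apply intervalIntegral.integral_congr
  intro t _
  have hP : (0:ℝ) < 1 + f₁ ^ 2 * t ^ 2 := by positivity
  have hQ : (0:ℝ) < 1 + f₂ ^ 2 * t ^ 2 := by positivity
  have hsP : Real.sqrt (1 + f₁ ^ 2 * t ^ 2) ^ 2 = 1 + f₁ ^ 2 * t ^ 2 := Real.sq_sqrt hP.le
  have hsQ : Real.sqrt (1 + f₂ ^ 2 * t ^ 2) ^ 2 = 1 + f₂ ^ 2 * t ^ 2 := Real.sq_sqrt hQ.le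
  have hsP0 : 0 < Real.sqrt (1 + f₁ ^ 2 * t ^ 2) := Real.sqrt_pos.mpr hP
  have hsQ0 : 0 < Real.sqrt (1 + f₂ ^ 2 * t ^ 2) := Real.sqrt_pos.mpr hQ
  beta_reduce
  rw [Real.sqrt_mul hP.le]
  rw [show (-(1:ℝ)/2) = -(1/2) by norm_num, Real.rpow_neg (by positivity),
    ← Real.sqrt_eq_rpow, Real.sqrt_div hQ.le]
  rw [← hsP, ← hsQ, Real.sqrt_sq hsP0.le]
  field_simp

lemma aux_lem_E (h0 : 0 < f₂) (h21 : f₂ < f₁) :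
    ∫ t in (0:ℝ)..1, f₁ * Real.sqrt (1 + f₂ ^ 2 * t ^ 2) / Real.sqrt (1 + f₁ ^ 2 * t ^ 2) ^ 3
      = ellipticE (Real.arctan f₁) (Real.sqrt (1 - f₂ ^ 2 / f₁ ^ 2)) := by
  have hf1 : 0 < f₁ := h0.trans h21
  have h := aux_subst_core f₁ f₂ h0 h21 ((1:ℝ)/2) _ rfl
  rw [ellipticE, ← h]
  apply intervalIntegral.integral_congr
  intro t _
  have hP : (0:ℝ) < 1 + f₁ ^ 2 * t ^ 2 := by positivity
  have hQ : (0:ℝ) < 1 + f₂ ^ 2 * t ^ 2 := by positivity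
  have hsP : Real.sqrt (1 + f₁ ^ 2 * t ^ 2) ^ 2 = 1 + f₁ ^ 2 * t ^ 2 := Real.sq_sqrt hP.le
  have hsQ : Real.sqrt (1 + f₂ ^ 2 * t ^ 2) ^ 2 = 1 + f₂ ^ 2 * t ^ 2 := Real.sq_sqrt hQ.le
  have hsP0 : 0 < Real.sqrt (1 + f₁ ^ 2 * t ^ 2) := Real.sqrt_pos.mpr hP
  have hsQ0 : 0 < Real.sqrt (1 + f₂ ^ 2 * t ^ 2) := Real.sqrt_pos.mpr hQ
  beta_reduce
  rw [← Real.sqrt_eq_rpow, Real.sqrt_div hQ.le]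
  rw [← hsP, ← hsQ, Real.sqrt_sq hsP0.le]
  field_simp
end

noncomputable def gfun (f₁ f₂ : ℝ) : ℝ → ℝ := fun t =>
  1 + f₁ ^ 2 * t ^ 2 + Real.sqrt ((1 + f₁ ^ 2 * t ^ 2) * (1 + f₂ ^ 2 * t ^ 2))

noncomputable def gfun' (f₁ f₂ : ℝ) : ℝ → ℝ := fun t =>
  2 * f₁ ^ 2 * t + (2 * f₁ ^ 2 * t * (1 + f₂ ^ 2 * t ^ 2)
    + (1 + f₁ ^ 2 * t ^ 2) * (2 * f₂ ^ 2 * t))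
    / (2 * Real.sqrt ((1 + f₁ ^ 2 * t ^ 2) * (1 + f₂ ^ 2 * t ^ 2)))

noncomputable def Hfun (f₁ f₂ : ℝ) : ℝ → ℝ := fun t => (f₂ ^ 2 - f₁ ^ 2) * t / gfun f₁ f₂ t

noncomputable def hder (f₁ f₂ : ℝ) : ℝ → ℝ := fun t =>
  ((f₂ ^ 2 - f₁ ^ 2) * gfun f₁ f₂ t - (f₂ ^ 2 - f₁ ^ 2) * t * gfun' f₁ f₂ t) / gfun f₁ f₂ t ^ 2

noncomputable def Rfun (f₁ f₂ : ℝ) : ℝ → ℝ := fun t =>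
  1 / Real.sqrt ((1 + f₁ ^ 2 * t ^ 2) * (1 + f₂ ^ 2 * t ^ 2))
    + f₁ ^ 2 * Real.sqrt (1 + f₂ ^ 2 * t ^ 2) / Real.sqrt (1 + f₁ ^ 2 * t ^ 2) ^ 3

section
variable (f₁ f₂ : ℝ)

lemma PQ_pos (t : ℝ) : 0 < (1 + f₁ ^ 2 * t ^ 2) * (1 + f₂ ^ 2 * t ^ 2) := by positivity

lemma sqrtPQ_pos (t : ℝ) : 0 < Real.sqrt ((1 + f₁ ^ 2 * t ^ 2) * (1 + f₂ ^ 2 * t ^ 2)) :=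
  Real.sqrt_pos.mpr (PQ_pos f₁ f₂ t)

lemma gfun_pos (t : ℝ) : 0 < gfun f₁ f₂ t := by
  have := sqrtPQ_pos f₁ f₂ t
  unfold gfun
  positivity

lemma gfun_hasDeriv (t : ℝ) : HasDerivAt (gfun f₁ f₂) (gfun' f₁ f₂ t) t := by
  have hP : HasDerivAt (fun t : ℝ => 1 + f₁ ^ 2 * t ^ 2) (f₁ ^ 2 * (2 * t ^ 1)) t :=
    (((hasDerivAt_pow 2 t)).const_mul (f₁ ^ 2)).const_add 1
  have hQ : HasDerivAt (fun t : ℝ => 1 + f₂ ^ 2 * t ^ 2) (f₂ ^ 2 * (2 * t ^ 1)) t :=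
    (((hasDerivAt_pow 2 t)).const_mul (f₂ ^ 2)).const_add 1
  have hPQ := hP.mul hQ
  have hs := hPQ.sqrt (PQ_pos f₁ f₂ t).ne'
  have h := hP.add hs
  refine h.congr_deriv (Eq.symm ?_)
  simp only [Pi.mul_apply]
  unfold gfun'
  have h2 : Real.sqrt ((1 + f₁ ^ 2 * t ^ 2) * (1 + f₂ ^ 2 * t ^ 2)) ≠ 0 :=
    (sqrtPQ_pos f₁ f₂ t).ne'
  field_simp

lemma Hfun_hasDeriv (t : ℝ) : HasDerivAt (Hfun f₁ f₂) (hder f₁ f₂ t) t := by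
  have h1 : HasDerivAt (fun t : ℝ => (f₂ ^ 2 - f₁ ^ 2) * t) (f₂ ^ 2 - f₁ ^ 2) t := by
    simpa using (hasDerivAt_id t).const_mul (f₂ ^ 2 - f₁ ^ 2)
  exact h1.div (gfun_hasDeriv f₁ f₂ t) (gfun_pos f₁ f₂ t).ne'

lemma hder_cont : Continuous (hder f₁ f₂) := by
  have hsc : Continuous fun t : ℝ =>
      Real.sqrt ((1 + f₁ ^ 2 * t ^ 2) * (1 + f₂ ^ 2 * t ^ 2)) := by fun_prop
  have hgc : Continuous (gfun f₁ f₂) := by unfold gfun; fun_prop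
  have hg'c : Continuous (gfun' f₁ f₂) := by
    unfold gfun'
    apply Continuous.add (by fun_prop)
    apply Continuous.div (by fun_prop) (by fun_prop)
    intro t
    have := sqrtPQ_pos f₁ f₂ t
    positivity
  unfold hder
  apply Continuous.div (by fun_prop) (by fun_prop)
  intro t
  exact pow_ne_zero 2 (gfun_pos f₁ f₂ t).ne'

lemma Rfun_cont : Continuous (Rfun f₁ f₂) := by
  unfold Rfun
  apply Continuous.add
  · apply Continuous.div continuous_const (by fun_prop)
    intro t; exact (sqrtPQ_pos f₁ f₂ t).ne'
  · apply Continuous.div (by fun_prop) (by fun_prop)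
    intro t
    have h1 : 0 < Real.sqrt (1 + f₁ ^ 2 * t ^ 2) :=
      Real.sqrt_pos.mpr (by positivity)
    positivity

lemma hder_add_R (h0 : 0 < f₂) (h21 : f₂ < f₁) (t : ℝ) (ht : 0 < t) :
    hder f₁ f₂ t + Rfun f₁ f₂ t
      = 1 / t ^ 2 + (1 - 1 / t ^ 2) *
          (1 / (Real.sqrt (1 + f₁ ^ 2 * t ^ 2) * Real.sqrt (1 + f₂ ^ 2 * t ^ 2))) := by
  have hPpos : (0:ℝ) < 1 + f₁ ^ 2 * t ^ 2 := by positivity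
  have hQpos : (0:ℝ) < 1 + f₂ ^ 2 * t ^ 2 := by positivity
  set p := Real.sqrt (1 + f₁ ^ 2 * t ^ 2) with hp
  set q := Real.sqrt (1 + f₂ ^ 2 * t ^ 2) with hq
  have hp0 : 0 < p := Real.sqrt_pos.mpr hPpos
  have hq0 : 0 < q := Real.sqrt_pos.mpr hQpos
  have hp2 : p ^ 2 = 1 + f₁ ^ 2 * t ^ 2 := Real.sq_sqrt hPpos.le
  have hq2 : q ^ 2 = 1 + f₂ ^ 2 * t ^ 2 := Real.sq_sqrt hQpos.le
  have hpq : Real.sqrt ((1 + f₁ ^ 2 * t ^ 2) * (1 + f₂ ^ 2 * t ^ 2)) = p * q :=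
    Real.sqrt_mul hPpos.le _
  unfold hder Rfun gfun gfun'
  rw [hpq, ← hp2, ← hq2, Real.sqrt_sq hp0.le, Real.sqrt_sq hq0.le]
  have hgne : p ^ 2 + p * q ≠ 0 := by positivity
  have h1 : p ^ 2 + p * q = p * (p + q) := by ring
  field_simp
  ring_nf
  linear_combination ((1)*t^2*f₂^2*q^2 + (1)*t^2*f₂^2*p^1*q^1 + (-2)*t^2*f₁^2*p^1*q^1 + (1)*t^4*f₁^2*f₂^2 + (-1)*t^4*f₂^4 + (-1)*q^2 + (1)*p^1*q^1 + (-1)*p^1*q^3 + (1)*p^2 + (-2)*p^2*q^2 + (-1)*p^3*q^1 + (1)*t^2*f₁^2 + (1) + (-2)*t^2*f₁^2*q^2) * hp2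
    + ((1)*t^2*f₁^2*p^1*q^1 + (1)*t^2*f₁^2*q^2 + (-1)*t^4*f₁^4 + (1)*t^2*f₂^2 + (1)*t^4*f₁^2*f₂^2 + (-2)*t^2*f₁^2 + (-1) + (-1)*p^1*q^1) * hq2

lemma Hfun_one (h0 : 0 < f₂) (h21 : f₂ < f₁) :
    Hfun f₁ f₂ 1 = Real.sqrt ((1 + f₂ ^ 2) / (1 + f₁ ^ 2)) - 1 := by
  have hPpos : (0:ℝ) < 1 + f₁ ^ 2 := by positivity
  have hQpos : (0:ℝ) < 1 + f₂ ^ 2 := by positivity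
  unfold Hfun gfun
  set p := Real.sqrt (1 + f₁ ^ 2) with hp
  set q := Real.sqrt (1 + f₂ ^ 2) with hq
  have hp0 : 0 < p := Real.sqrt_pos.mpr hPpos
  have hq0 : 0 < q := Real.sqrt_pos.mpr hQpos
  have hp2 : p ^ 2 = 1 + f₁ ^ 2 := Real.sq_sqrt hPpos.le
  have hq2 : q ^ 2 = 1 + f₂ ^ 2 := Real.sq_sqrt hQpos.le
  have h1 : (1 + f₁ ^ 2 * 1 ^ 2 : ℝ) = 1 + f₁ ^ 2 := by ring
  have h2 : (1 + f₂ ^ 2 * 1 ^ 2 : ℝ) = 1 + f₂ ^ 2 := by ring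
  rw [h1, h2, Real.sqrt_mul hPpos.le, ← hp, ← hq, Real.sqrt_div hQpos.le, ← hp, ← hq]
  have hne : 1 + f₁ ^ 2 + p * q ≠ 0 := by positivity
  field_simp
  linear_combination q * hp2 - p * hq2

lemma aux_lem_J (h0 : 0 < f₂) (h21 : f₂ < f₁) (t : ℝ) (ht : 0 < t) :
    ∫ φ in (0:ℝ)..(Real.pi/2),
        (1 + (f₁ ^ 2 * Real.cos φ ^ 2 + f₂ ^ 2 * Real.sin φ ^ 2)) /
          (2 * (1 + (f₁ ^ 2 * Real.cos φ ^ 2 + f₂ ^ 2 * Real.sin φ ^ 2) * t ^ 2))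
      = Real.pi / 4 * (hder f₁ f₂ t + Rfun f₁ f₂ t) := by
  have hPpos : (0:ℝ) < 1 + f₁ ^ 2 * t ^ 2 := by positivity
  have hQpos : (0:ℝ) < 1 + f₂ ^ 2 * t ^ 2 := by positivity
  have hcongr : ∀ φ ∈ Set.uIcc (0:ℝ) (Real.pi/2),
      (1 + (f₁ ^ 2 * Real.cos φ ^ 2 + f₂ ^ 2 * Real.sin φ ^ 2)) /
          (2 * (1 + (f₁ ^ 2 * Real.cos φ ^ 2 + f₂ ^ 2 * Real.sin φ ^ 2) * t ^ 2))
        = 1/(2*t^2) + ((1 - 1/t^2)/2) *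
            (1 / ((1 + f₁ ^ 2 * t ^ 2) * Real.cos φ ^ 2 + (1 + f₂ ^ 2 * t ^ 2) * Real.sin φ ^ 2)) := by
    intro φ _
    have hpyth : Real.sin φ ^ 2 + Real.cos φ ^ 2 = 1 := Real.sin_sq_add_cos_sq φ
    have hd1 : (0:ℝ) < 1 + (f₁ ^ 2 * Real.cos φ ^ 2 + f₂ ^ 2 * Real.sin φ ^ 2) * t ^ 2 := by positivity
    have hd2 : (0:ℝ) < (1 + f₁ ^ 2 * t ^ 2) * Real.cos φ ^ 2 + (1 + f₂ ^ 2 * t ^ 2) * Real.sin φ ^ 2 :=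
      aux_quad_trig_pos _ _ hPpos hQpos φ
    have hD : (1 + f₁ ^ 2 * t ^ 2) * Real.cos φ ^ 2 + (1 + f₂ ^ 2 * t ^ 2) * Real.sin φ ^ 2
        = 1 + (f₁ ^ 2 * Real.cos φ ^ 2 + f₂ ^ 2 * Real.sin φ ^ 2) * t ^ 2 := by
      linear_combination hpyth
    rw [hD]
    have htne : t ≠ 0 := ht.ne'
    field_simp
    ring
  rw [intervalIntegral.integral_congr hcongr]
  have hint : IntervalIntegrable (fun φ => 1 / ((1 + f₁ ^ 2 * t ^ 2) * Real.cos φ ^ 2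
      + (1 + f₂ ^ 2 * t ^ 2) * Real.sin φ ^ 2)) MeasureTheory.volume 0 (Real.pi/2) := by
    apply Continuous.intervalIntegrable
    apply continuous_const.div (by fun_prop)
    intro φ; exact (aux_quad_trig_pos _ _ hPpos hQpos φ).ne'
  rw [intervalIntegral.integral_add (intervalIntegrable_const) (hint.const_mul _)]
  rw [intervalIntegral.integral_const_mul, aux_lem_K _ _ hPpos hQpos]
  rw [intervalIntegral.integral_const]
  have halg := hder_add_R f₁ f₂ h0 h21 t ht
  rw [Real.sqrt_mul hPpos.le]
  rw [show hder f₁ f₂ t + Rfun f₁ f₂ t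
      = 1 / t ^ 2 + (1 - 1 / t ^ 2) *
        (1 / (Real.sqrt (1 + f₁ ^ 2 * t ^ 2) * Real.sqrt (1 + f₂ ^ 2 * t ^ 2))) from halg]
  have hsp : 0 < Real.sqrt (1 + f₁ ^ 2 * t ^ 2) := Real.sqrt_pos.mpr hPpos
  have hsq : 0 < Real.sqrt (1 + f₂ ^ 2 * t ^ 2) := Real.sqrt_pos.mpr hQpos
  have htne : t ≠ 0 := ht.ne'
  have ht2 : t ^ 2 * t⁻¹ ^ 2 = 1 := by field_simp
  generalize Real.sqrt (1 + f₁ ^ 2 * t ^ 2) = P at hsp ⊢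
  generalize Real.sqrt (1 + f₂ ^ 2 * t ^ 2) = Q at hsq ⊢
  field_simp
  linear_combination (4 * Real.pi * P * Q) * ht2
end

lemma aux_step3 (mv : ℝ) (hmv : 0 < mv) :
    (1 + mv) / (2 * Real.sqrt mv) * Real.arctan (Real.sqrt mv)
      = ∫ t in (0:ℝ)..1, (1 + mv) / (2 * (1 + mv * t ^ 2)) := by
  have h1 : ∀ t ∈ Set.uIcc (0:ℝ) 1,
      (1 + mv) / (2 * (1 + mv * t ^ 2)) = ((1 + mv)/2) * (1 / (1 + mv * t ^ 2)) := by
    intro t _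
    have : (0:ℝ) < 1 + mv * t ^ 2 := by positivity
    field_simp
  rw [intervalIntegral.integral_congr h1, intervalIntegral.integral_const_mul,
    aux_lem_b mv hmv]
  have hsm : 0 < Real.sqrt mv := Real.sqrt_pos.mpr hmv
  field_simp

lemma aux_fubini (f₁ f₂ : ℝ) :
    (∫ φ in (0:ℝ)..(Real.pi/2), ∫ t in (0:ℝ)..1,
        (1 + (f₁ ^ 2 * Real.cos φ ^ 2 + f₂ ^ 2 * Real.sin φ ^ 2)) /
          (2 * (1 + (f₁ ^ 2 * Real.cos φ ^ 2 + f₂ ^ 2 * Real.sin φ ^ 2) * t ^ 2)))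
      = ∫ t in (0:ℝ)..1, ∫ φ in (0:ℝ)..(Real.pi/2),
        (1 + (f₁ ^ 2 * Real.cos φ ^ 2 + f₂ ^ 2 * Real.sin φ ^ 2)) /
          (2 * (1 + (f₁ ^ 2 * Real.cos φ ^ 2 + f₂ ^ 2 * Real.sin φ ^ 2) * t ^ 2)) := by
  have hpi : (0:ℝ) ≤ Real.pi/2 := by positivity
  have hcont : Continuous (fun z : ℝ × ℝ =>
      (1 + (f₁ ^ 2 * Real.cos z.1 ^ 2 + f₂ ^ 2 * Real.sin z.1 ^ 2)) /
        (2 * (1 + (f₁ ^ 2 * Real.cos z.1 ^ 2 + f₂ ^ 2 * Real.sin z.1 ^ 2) * z.2 ^ 2))) := by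
    apply Continuous.div (by fun_prop) (by fun_prop)
    intro z
    have h1 : (0:ℝ) ≤ f₁ ^ 2 * Real.cos z.1 ^ 2 + f₂ ^ 2 * Real.sin z.1 ^ 2 := by positivity
    positivity
  simp only [intervalIntegral.integral_of_le hpi, intervalIntegral.integral_of_le
    (zero_le_one : (0:ℝ) ≤ 1)]
  apply MeasureTheory.integral_integral_swap
  have hInt : MeasureTheory.IntegrableOn (fun z : ℝ × ℝ =>
      (1 + (f₁ ^ 2 * Real.cos z.1 ^ 2 + f₂ ^ 2 * Real.sin z.1 ^ 2)) /
        (2 * (1 + (f₁ ^ 2 * Real.cos z.1 ^ 2 + f₂ ^ 2 * Real.sin z.1 ^ 2) * z.2 ^ 2)))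
      (Set.Ioc (0:ℝ) (Real.pi/2) ×ˢ Set.Ioc (0:ℝ) 1)
      (MeasureTheory.volume.prod MeasureTheory.volume) := by
    apply MeasureTheory.IntegrableOn.mono_set
      (t := Set.Icc (0:ℝ) (Real.pi/2) ×ˢ Set.Icc (0:ℝ) 1)
    · exact hcont.continuousOn.integrableOn_compact (isCompact_Icc.prod isCompact_Icc)
    · exact Set.prod_mono Set.Ioc_subset_Icc_self Set.Ioc_subset_Icc_self
  rw [MeasureTheory.Measure.prod_restrict]
  exact hInt

theorem stmt_16 (f₁ f₂ : ℝ) (h0 : 0 < f₂) (h21 : f₂ < f₁)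
    (φb kb : ℝ) (hφb : φb = Real.arctan f₁)
    (hkb : kb = Real.sqrt (1 - f₂ ^ 2 / f₁ ^ 2)) :
    (∫ φ' in (0:ℝ)..(Real.pi / 2), ∫ θ in (0:ℝ)..(Real.pi / 2),
        Real.sin θ *
          Real.sqrt (1 + (f₁ ^ 2 * Real.cos φ' ^ 2 + f₂ ^ 2 * Real.sin φ' ^ 2)
            * Real.sin θ ^ 2))
      = Real.pi / 4 *
          (Real.sqrt ((1 + f₂ ^ 2) / (1 + f₁ ^ 2))
            + ellipticF φb kb / f₁
            + f₁ * ellipticE φb kb) := by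
  have hf1 : 0 < f₁ := h0.trans h21
  have hmpos : ∀ φ : ℝ, 0 < f₁ ^ 2 * Real.cos φ ^ 2 + f₂ ^ 2 * Real.sin φ ^ 2 :=
    fun φ => aux_quad_trig_pos _ _ (by positivity) (by positivity) φ
  -- step 1: evaluate the inner θ-integral, and replace arctan by a t-integral
  have step1 : ∀ φ ∈ Set.uIcc (0:ℝ) (Real.pi/2),
      (∫ θ in (0:ℝ)..(Real.pi / 2), Real.sin θ *
          Real.sqrt (1 + (f₁ ^ 2 * Real.cos φ ^ 2 + f₂ ^ 2 * Real.sin φ ^ 2)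
            * Real.sin θ ^ 2))
        = 1/2 + ∫ t in (0:ℝ)..1,
            (1 + (f₁ ^ 2 * Real.cos φ ^ 2 + f₂ ^ 2 * Real.sin φ ^ 2)) /
              (2 * (1 + (f₁ ^ 2 * Real.cos φ ^ 2 + f₂ ^ 2 * Real.sin φ ^ 2) * t ^ 2)) := by
    intro φ _
    rw [aux_lem_inner _ (hmpos φ), aux_step3 _ (hmpos φ)]
  rw [intervalIntegral.integral_congr step1]
  -- step 2: split off the constant 1/2
  have hc_int : IntervalIntegrable (fun φ =>
      (1 + (f₁ ^ 2 * Real.cos φ ^ 2 + f₂ ^ 2 * Real.sin φ ^ 2)) /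
        (2 * Real.sqrt (f₁ ^ 2 * Real.cos φ ^ 2 + f₂ ^ 2 * Real.sin φ ^ 2)) *
      Real.arctan (Real.sqrt (f₁ ^ 2 * Real.cos φ ^ 2 + f₂ ^ 2 * Real.sin φ ^ 2)))
      MeasureTheory.volume 0 (Real.pi/2) := by
    apply Continuous.intervalIntegrable
    apply Continuous.mul _ (Real.continuous_arctan.comp (by fun_prop))
    apply Continuous.div (by fun_prop) (by fun_prop)
    intro φ
    have := Real.sqrt_pos.mpr (hmpos φ)
    positivity
  have hc_int2 : IntervalIntegrable (fun φ => ∫ t in (0:ℝ)..1,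
      (1 + (f₁ ^ 2 * Real.cos φ ^ 2 + f₂ ^ 2 * Real.sin φ ^ 2)) /
        (2 * (1 + (f₁ ^ 2 * Real.cos φ ^ 2 + f₂ ^ 2 * Real.sin φ ^ 2) * t ^ 2)))
      MeasureTheory.volume 0 (Real.pi/2) := by
    have heq : (fun φ => ∫ t in (0:ℝ)..1,
        (1 + (f₁ ^ 2 * Real.cos φ ^ 2 + f₂ ^ 2 * Real.sin φ ^ 2)) /
          (2 * (1 + (f₁ ^ 2 * Real.cos φ ^ 2 + f₂ ^ 2 * Real.sin φ ^ 2) * t ^ 2)))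
        = (fun φ =>
            (1 + (f₁ ^ 2 * Real.cos φ ^ 2 + f₂ ^ 2 * Real.sin φ ^ 2)) /
              (2 * Real.sqrt (f₁ ^ 2 * Real.cos φ ^ 2 + f₂ ^ 2 * Real.sin φ ^ 2)) *
            Real.arctan (Real.sqrt (f₁ ^ 2 * Real.cos φ ^ 2 + f₂ ^ 2 * Real.sin φ ^ 2))) := by
      funext φ
      rw [← aux_step3 _ (hmpos φ)]
    rw [heq]
    exact hc_int
  rw [intervalIntegral.integral_add intervalIntegrable_const hc_int2]
  rw [intervalIntegral.integral_const]
  -- step 4: Fubini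
  rw [aux_fubini f₁ f₂]
  -- step 5: evaluate the inner φ-integral
  have step5 : ∫ t in (0:ℝ)..1, (∫ φ in (0:ℝ)..(Real.pi/2),
      (1 + (f₁ ^ 2 * Real.cos φ ^ 2 + f₂ ^ 2 * Real.sin φ ^ 2)) /
        (2 * (1 + (f₁ ^ 2 * Real.cos φ ^ 2 + f₂ ^ 2 * Real.sin φ ^ 2) * t ^ 2)))
      = ∫ t in (0:ℝ)..1, Real.pi / 4 * (hder f₁ f₂ t + Rfun f₁ f₂ t) := by
    apply intervalIntegral.integral_congr_ae
    apply MeasureTheory.ae_of_all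
    intro t ht
    have ht' : t ∈ Set.Ioc (0:ℝ) 1 := by
      rwa [Set.uIoc_of_le (zero_le_one : (0:ℝ) ≤ 1)] at ht
    exact aux_lem_J f₁ f₂ h0 h21 t ht'.1
  rw [step5]
  rw [intervalIntegral.integral_const_mul]
  rw [intervalIntegral.integral_add ((hder_cont f₁ f₂).intervalIntegrable 0 1)
    ((Rfun_cont f₁ f₂).intervalIntegrable 0 1)]
  -- step 7: FTC for hder
  have step7 : ∫ t in (0:ℝ)..1, hder f₁ f₂ t = Real.sqrt ((1 + f₂ ^ 2) / (1 + f₁ ^ 2)) - 1 := by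
    rw [intervalIntegral.integral_eq_sub_of_hasDerivAt
      (fun t _ => Hfun_hasDeriv f₁ f₂ t) ((hder_cont f₁ f₂).intervalIntegrable 0 1)]
    rw [Hfun_one f₁ f₂ h0 h21]
    unfold Hfun
    simp
  rw [step7]
  -- step 8: the elliptic integrals
  have hR1 : IntervalIntegrable (fun t : ℝ =>
      1 / Real.sqrt ((1 + f₁ ^ 2 * t ^ 2) * (1 + f₂ ^ 2 * t ^ 2)))
      MeasureTheory.volume 0 1 := by
    apply Continuous.intervalIntegrable
    apply continuous_const.div (by fun_prop)
    intro t; exact (sqrtPQ_pos f₁ f₂ t).ne'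
  have hR2 : IntervalIntegrable (fun t : ℝ =>
      f₁ ^ 2 * Real.sqrt (1 + f₂ ^ 2 * t ^ 2) / Real.sqrt (1 + f₁ ^ 2 * t ^ 2) ^ 3)
      MeasureTheory.volume 0 1 := by
    apply Continuous.intervalIntegrable
    apply Continuous.div (by fun_prop) (by fun_prop)
    intro t
    have h1 : 0 < Real.sqrt (1 + f₁ ^ 2 * t ^ 2) := Real.sqrt_pos.mpr (by positivity)
    positivity
  have step8 : ∫ t in (0:ℝ)..1, Rfun f₁ f₂ t
      = (1/f₁) * ellipticF φb kb + f₁ * ellipticE φb kb := by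
    unfold Rfun
    rw [intervalIntegral.integral_add hR1 hR2]
    have h8a : ∫ t in (0:ℝ)..1, 1 / Real.sqrt ((1 + f₁ ^ 2 * t ^ 2) * (1 + f₂ ^ 2 * t ^ 2))
        = (1/f₁) * ellipticF φb kb := by
      rw [hφb, hkb, ← aux_lem_F f₁ f₂ h0 h21, ← intervalIntegral.integral_const_mul]
      apply intervalIntegral.integral_congr
      intro t _
      have := (sqrtPQ_pos f₁ f₂ t).ne'
      field_simp
    have h8b : ∫ t in (0:ℝ)..1,
        f₁ ^ 2 * Real.sqrt (1 + f₂ ^ 2 * t ^ 2) / Real.sqrt (1 + f₁ ^ 2 * t ^ 2) ^ 3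
        = f₁ * ellipticE φb kb := by
      rw [hφb, hkb, ← aux_lem_E f₁ f₂ h0 h21, ← intervalIntegral.integral_const_mul]
      apply intervalIntegral.integral_congr
      intro t _
      have h1 : 0 < Real.sqrt (1 + f₁ ^ 2 * t ^ 2) := Real.sqrt_pos.mpr (by positivity)
      field_simp
    rw [h8a, h8b]
  rw [step8]
  have hpi : (0:ℝ) < Real.pi := Real.pi_pos
  simp only [smul_eq_mul, sub_zero]
  field_simp
  ring
end
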